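/- arXiv:2203.07978 — 11 statements merged into one kernel-verified Lean document; each statement's English description precedes it below -/
import Mathlib

section
/- Let α : ℝ → ℝ be an extended class K function (strictly increasing with α(0) = 0) and let ψ : ℝ → ℝ be differentiable. If ψ(0) ≥ 0 and ψ'(t) + α(ψ(t)) ≥ 0 for all t ≥ 0, then ψ(t) ≥ 0 for all t ≥ 0. (This is the forward-invariance property of a control barrier function of relative degree one along a trajectory: the set C = {ψ ≥ 0} is forward invariant.) -/
/-- Forward invariance for a relative-degree-one CBF along a trajectory:
if `α` is an extended class K function (strictly increasing, `α 0 = 0`),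
`ψ` is differentiable, `ψ 0 ≥ 0`, and `ψ' t + α (ψ t) ≥ 0` for all `t ≥ 0`,
then `ψ t ≥ 0` for all `t ≥ 0`. -/
theorem cbf_forward_invariance
    (α : ℝ → ℝ) (hα_mono : StrictMono α) (hα_zero : α 0 = 0)
    (ψ : ℝ → ℝ) (hψ : Differentiable ℝ ψ)
    (h0 : ψ 0 ≥ 0)
    (hcbf : ∀ t : ℝ, 0 ≤ t → deriv ψ t + α (ψ t) ≥ 0) :
    ∀ t : ℝ, 0 ≤ t → ψ t ≥ 0 := by
  intro t0 ht0
  by_contra hneg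
  push_neg at hneg
  set S : Set ℝ := Set.Icc 0 t0 ∩ ψ ⁻¹' Set.Ici 0 with hS
  have hSclosed : IsClosed S :=
    isClosed_Icc.inter (isClosed_Ici.preimage hψ.continuous)
  have hS0 : (0 : ℝ) ∈ S := ⟨⟨le_refl 0, ht0⟩, h0⟩
  have hSne : S.Nonempty := ⟨0, hS0⟩
  have hSbdd : BddAbove S := ⟨t0, fun x hx => hx.1.2⟩
  set s := sSup S with hs
  have hsS : s ∈ S := hSclosed.csSup_mem hSne hSbdd
  have hs0 : 0 ≤ s := hsS.1.1
  have hst0 : s ≤ t0 := hsS.1.2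
  have hψs : 0 ≤ ψ s := hsS.2
  have hslt : s < t0 := by
    rcases lt_or_eq_of_le hst0 with h | h
    · exact h
    · exact absurd (h ▸ hψs) (not_le.mpr hneg)
  -- on (s, t0], ψ < 0
  have hlt : ∀ x ∈ Set.Ioc s t0, ψ x < 0 := by
    intro x hx
    by_contra hge
    push_neg at hge
    have : x ∈ S := ⟨⟨hs0.trans hx.1.le, hx.2⟩, hge⟩
    exact absurd (le_csSup hSbdd this) (not_le.mpr hx.1)
  -- deriv positive on interior
  have hmono : StrictMonoOn ψ (Set.Icc s t0) := by
    apply strictMonoOn_of_deriv_pos (convex_Icc s t0) (hψ.continuous.continuousOn)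
    intro x hx
    rw [interior_Icc] at hx
    have hxneg : ψ x < 0 := hlt x ⟨hx.1, hx.2.le⟩
    have hαneg : α (ψ x) < 0 := hα_zero ▸ hα_mono hxneg
    have := hcbf x (hs0.trans hx.1.le)
    linarith
  have := hmono (Set.left_mem_Icc.mpr hst0) (Set.right_mem_Icc.mpr hst0) hslt
  linarith
end

section
/- (Theorem 1, HOCBF forward invariance, trajectory form.) Let m ≥ 1, and for i = 1,…,m let αᵢ : ℝ → ℝ be an extended class K function (strictly increasing with αᵢ(0) = 0), where αᵢ is additionally (m−i)-times continuously differentiable for i ≤ m−1. Let ψ₀ : ℝ → ℝ be m-times differentiable, and define inductively ψᵢ(t) = ψᵢ₋₁'(t) + αᵢ(ψᵢ₋₁(t)) for i = 1,…,m. If ψᵢ(0) ≥ 0 for every i = 0,…,m−1 and ψₘ(t) ≥ 0 for all t ≥ 0, then ψᵢ(t) ≥ 0 for every i = 0,…,m−1 and all t ≥ 0; in particular ψ₀(t) ≥ 0 for all t ≥ 0, i.e., the set C₁ ∩ … ∩ Cₘ where Cᵢ = {ψᵢ₋₁ ≥ 0} is forward invariant along the trajectory. -/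
/-!
Wherever `ψ (i-1) < 0`, the class K property gives `α i (ψ (i-1)) < 0`, so `ψ i ≥ 0` forces
`ψ (i-1)' ≥ 0` there: `ψ (i-1)` is nondecreasing while negative, so having started nonnegative it can
never become negative. Descending from `ψ m ≥ 0` gives `ψ i ≥ 0` for all `i < m`. Differentiability
of these `ψ i` is propagated along the recursion from that of `ψ 0` and the `αᵢ`.
-/

open Set

/-- Unlike `ContDiff 𝕜 n f`, this does not ask the `n`-th derivative to be continuous. -/
def NTimesDifferentiable (𝕜 : Type*) [NontriviallyNormedField 𝕜] (n : ℕ) (f : 𝕜 → 𝕜) : Prop :=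
  ∀ k < n, Differentiable 𝕜 (deriv^[k] f)

namespace NTimesDifferentiable

variable {𝕜 : Type*} [NontriviallyNormedField 𝕜] {n k : ℕ} {f g : 𝕜 → 𝕜}

theorem mono (hf : NTimesDifferentiable 𝕜 n f) (hk : k ≤ n) : NTimesDifferentiable 𝕜 k f :=
  fun j hj => hf j (hj.trans_le hk)

theorem differentiable (hf : NTimesDifferentiable 𝕜 n f) (hn : n ≠ 0) : Differentiable 𝕜 f :=
  hf 0 (Nat.pos_of_ne_zero hn)

theorem succ_iff :
    NTimesDifferentiable 𝕜 (n + 1) f ↔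
      Differentiable 𝕜 f ∧ NTimesDifferentiable 𝕜 n (deriv f) := by
  constructor
  · intro hf
    exact ⟨hf 0 n.succ_pos, fun k hk => by
      simpa only [Function.iterate_succ_apply] using hf (k + 1) (by omega)⟩
  · rintro ⟨hf, hf'⟩ (_ | k) hk
    · exact hf
    · simpa only [Function.iterate_succ_apply] using hf' k (by omega)

theorem add (hf : NTimesDifferentiable 𝕜 n f) (hg : NTimesDifferentiable 𝕜 n g) :
    NTimesDifferentiable 𝕜 n (f + g) := by
  induction n generalizing f g with
  | zero => exact fun k hk => absurd hk k.not_lt_zero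
  | succ n ih =>
    rw [succ_iff] at hf hg ⊢
    have hderiv : deriv (f + g) = deriv f + deriv g :=
      funext fun x => deriv_add (hf.1 x) (hg.1 x)
    exact ⟨hf.1.add hg.1, hderiv ▸ ih hf.2 hg.2⟩

theorem mul (hf : NTimesDifferentiable 𝕜 n f) (hg : NTimesDifferentiable 𝕜 n g) :
    NTimesDifferentiable 𝕜 n (f * g) := by
  induction n generalizing f g with
  | zero => exact fun k hk => absurd hk k.not_lt_zero
  | succ n ih =>
    have hf_n := hf.mono n.le_succ
    have hg_n := hg.mono n.le_succ
    rw [succ_iff] at hf hg ⊢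
    have hderiv : deriv (f * g) = deriv f * g + f * deriv g :=
      funext fun x => deriv_mul (hf.1 x) (hg.1 x)
    exact ⟨hf.1.mul hg.1, hderiv ▸ (ih hf.2 hg_n).add (ih hf_n hg.2)⟩

theorem contDiff_comp {g : 𝕜 → 𝕜} (hf : NTimesDifferentiable 𝕜 n f)
    (hg : ContDiff 𝕜 ((n : ℕ) : ℕ∞) g) : NTimesDifferentiable 𝕜 n (g ∘ f) := by
  induction n generalizing g f with
  | zero => exact fun k hk => absurd hk k.not_lt_zero
  | succ n ih =>
    have hf_n := hf.mono n.le_succ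
    have hg_diff : Differentiable 𝕜 g := hg.differentiable (by simp)
    have hg' : ContDiff 𝕜 ((n : ℕ) : ℕ∞) (deriv g) := ContDiff.deriv' (by exact_mod_cast hg)
    rw [succ_iff] at hf ⊢
    have hderiv : deriv (g ∘ f) = (deriv g ∘ f) * deriv f :=
      funext fun x => deriv_comp x (hg_diff (f x)) (hf.1 x)
    exact ⟨hg_diff.comp hf.1, hderiv ▸ (ih hf_n hg').mul hf.2⟩

theorem of_deriv_add_comp {m : ℕ} {ψ α : ℕ → 𝕜 → 𝕜} (h0 : NTimesDifferentiable 𝕜 m (ψ 0))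
    (hα : ∀ i, i + 1 < m → ContDiff 𝕜 ((m - (i + 1) : ℕ) : ℕ∞) (α (i + 1)))
    (hψ : ∀ i, i + 1 < m → ψ (i + 1) = deriv (ψ i) + α (i + 1) ∘ ψ i) :
    ∀ i < m, NTimesDifferentiable 𝕜 (m - i) (ψ i) := by
  intro i
  induction i with
  | zero => exact fun _ => h0
  | succ i ih =>
    intro hi
    have hψi : NTimesDifferentiable 𝕜 (m - (i + 1) + 1) (ψ i) := by
      simpa only [show m - (i + 1) + 1 = m - i by omega] using ih (by omega)
    rw [hψ i hi]
    exact (succ_iff.1 hψi).2.add <| (hψi.mono (by omega)).contDiff_comp (hα i hi)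

end NTimesDifferentiable

theorem nonneg_of_deriv_nonneg_where_neg {f : ℝ → ℝ} {a : ℝ} (hf : Differentiable ℝ f)
    (ha : 0 ≤ f a) (hderiv : ∀ t, a < t → f t < 0 → 0 ≤ deriv f t) :
    ∀ t, a ≤ t → 0 ≤ f t := by
  by_contra! ⟨t₀, hat₀, hft₀⟩
  -- `s` is the last time in `[a, t₀]` at which `f` is nonnegative.
  set S := Icc a t₀ ∩ f ⁻¹' Ici 0
  have hS_compact : IsCompact S := isCompact_Icc.inter_right (isClosed_Ici.preimage hf.continuous)
  have hs : sSup S ∈ S := hS_compact.sSup_mem ⟨a, ⟨le_rfl, hat₀⟩, ha⟩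
  set s := sSup S
  have hfs : 0 ≤ f s := hs.2
  have hst₀ : s < t₀ := hs.1.2.lt_of_ne fun h => by linarith [h ▸ hfs]
  have hneg : ∀ t ∈ Ioc s t₀, f t < 0 := fun t ht => by
    by_contra! hft
    exact ht.1.not_ge (le_csSup hS_compact.bddAbove ⟨⟨hs.1.1.trans ht.1.le, ht.2⟩, hft⟩)
  have hmono : MonotoneOn f (Icc s t₀) := by
    refine monotoneOn_of_deriv_nonneg (convex_Icc s t₀) hf.continuous.continuousOn
      hf.differentiableOn fun t ht => ?_
    rw [interior_Icc] at ht
    exact hderiv t (hs.1.1.trans_lt ht.1) (hneg t ⟨ht.1, ht.2.le⟩)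
  linarith [hmono ⟨le_rfl, hst₀.le⟩ ⟨hst₀.le, le_rfl⟩ hst₀.le, hfs]

theorem nonneg_of_deriv_add_comp_nonneg {f φ : ℝ → ℝ} {a : ℝ} (hf : Differentiable ℝ f)
    (hφ : ∀ x < 0, φ x ≤ 0) (ha : 0 ≤ f a) (h : ∀ t, a ≤ t → 0 ≤ deriv f t + φ (f t)) :
    ∀ t, a ≤ t → 0 ≤ f t :=
  nonneg_of_deriv_nonneg_where_neg hf ha fun t hat hft => by
    linarith [h t hat.le, hφ _ hft]

theorem hocbf_forward_invariance_general
    (m : ℕ)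
    (α : ℕ → ℝ → ℝ)
    (hα_mono : ∀ i, 1 ≤ i → i ≤ m → StrictMono (α i))
    (hα_zero : ∀ i, 1 ≤ i → i ≤ m → α i 0 = 0)
    (hα_smooth : ∀ i, 1 ≤ i → i ≤ m - 1 → ContDiff ℝ ((m - i : ℕ) : ℕ∞) (α i))
    (ψ : ℕ → ℝ → ℝ)
    (hψ0_diff : ∀ k < m, Differentiable ℝ (deriv^[k] (ψ 0)))
    (hψ_def : ∀ i, 1 ≤ i → i ≤ m →
      ∀ t : ℝ, ψ i t = deriv (ψ (i - 1)) t + α i (ψ (i - 1) t))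
    (hinit : ∀ i < m, ψ i 0 ≥ 0)
    (hconstr : ∀ t : ℝ, 0 ≤ t → ψ m t ≥ 0) :
    ∀ i < m, ∀ t : ℝ, 0 ≤ t → ψ i t ≥ 0 := by
  have hstep : ∀ i < m, ψ (i + 1) = deriv (ψ i) + α (i + 1) ∘ ψ i := fun i hi =>
    funext fun t => hψ_def (i + 1) (by omega) (by omega) t
  have hsmooth : ∀ i < m, NTimesDifferentiable ℝ (m - i) (ψ i) :=
    NTimesDifferentiable.of_deriv_add_comp hψ0_diff
      (fun i hi => hα_smooth (i + 1) (by omega) (by omega)) fun i hi => hstep i (by omega)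
  intro i hi t ht
  refine Nat.decreasingInduction (motive := fun k _ => ∀ t, 0 ≤ t → 0 ≤ ψ k t)
    (fun k hk ih => ?_) hconstr hi.le t ht
  have hα_neg : ∀ x < 0, α (k + 1) x ≤ 0 := fun x hx => by
    simpa only [hα_zero (k + 1) (by omega) (by omega)] using
      (hα_mono (k + 1) (by omega) (by omega)).monotone hx.le
  refine nonneg_of_deriv_add_comp_nonneg ((hsmooth k hk).differentiable (by omega)) hα_neg
    (hinit k hk) fun t ht => ?_
  simpa only [hstep k hk, Pi.add_apply, Function.comp_apply] using ih t ht

/-- Theorem 1 (HOCBF forward invariance, trajectory form).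
`ψ 0` is `m`-times differentiable, `ψ i = ψ (i-1)' + αᵢ ∘ ψ (i-1)` for `i = 1,…,m`,
where each `αᵢ` is an extended class K function (strictly increasing, vanishing at 0),
`(m-i)`-times continuously differentiable for `i ≤ m-1`.
If `ψ i 0 ≥ 0` for all `i < m` and `ψ m t ≥ 0` for all `t ≥ 0`,
then `ψ i t ≥ 0` for all `i < m` and all `t ≥ 0`. -/
theorem hocbf_forward_invariance
    (m : ℕ) (hm : 1 ≤ m)
    (α : ℕ → ℝ → ℝ)
    (hα_mono : ∀ i, 1 ≤ i → i ≤ m → StrictMono (α i))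
    (hα_zero : ∀ i, 1 ≤ i → i ≤ m → α i 0 = 0)
    (hα_smooth : ∀ i, 1 ≤ i → i ≤ m - 1 → ContDiff ℝ ((m - i : ℕ) : ℕ∞) (α i))
    (ψ : ℕ → ℝ → ℝ)
    (hψ0_diff : ∀ k < m, Differentiable ℝ (deriv^[k] (ψ 0)))
    (hψ_def : ∀ i, 1 ≤ i → i ≤ m →
      ∀ t : ℝ, ψ i t = deriv (ψ (i - 1)) t + α i (ψ (i - 1) t))
    (hinit : ∀ i < m, ψ i 0 ≥ 0)
    (hconstr : ∀ t : ℝ, 0 ≤ t → ψ m t ≥ 0) :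
    ∀ i < m, ∀ t : ℝ, 0 ≤ t → ψ i t ≥ 0 :=
  hocbf_forward_invariance_general m α hα_mono hα_zero hα_smooth ψ hψ0_diff hψ_def hinit hconstr
end

section
/- (Theorem 3, HOCBF based on constraint transformation.) Let b, b_T : ℝⁿ → ℝ be such that for every z ∈ ℝⁿ, b_T(z) ≥ 0 implies b(z) ≥ 0. Let x : ℝ → ℝⁿ be a trajectory such that ψ₀(t) := b_T(x(t)) is m-times differentiable, let α₁,…,αₘ : ℝ → ℝ be extended class K functions (strictly increasing with αᵢ(0) = 0, with αᵢ (m−i)-times continuously differentiable for i ≤ m−1), and define ψᵢ(t) = ψᵢ₋₁'(t) + αᵢ(ψᵢ₋₁(t)) for i = 1,…,m. If ψᵢ(0) ≥ 0 for every i = 0,…,m−1 and ψₘ(t) ≥ 0 for all t ≥ 0, then b(x(t)) ≥ 0 for all t ≥ 0. -/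
/-!
Along the trajectory, `ψᵢ₊₁ = ψᵢ' + αᵢ₊₁ ∘ ψᵢ` and `αᵢ₊₁ < 0` on the negative reals, so `ψᵢ` is
strictly increasing wherever it is negative; from `ψᵢ(0) ≥ 0` it can then never become negative
once `ψᵢ₊₁ ≥ 0`. Descending from `ψₘ ≥ 0` gives `b_T(x(t)) = ψ₀(t) ≥ 0`, hence `b(x(t)) ≥ 0`.
The smoothness of `ψ₀` and of the `αᵢ` is what makes each `ψᵢ`, `i < m`, differentiable.
-/

open Set

/-- `n`-fold differentiability: weaker than `ContDiff 𝕜 n f`, the `n`-th derivative need not be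
continuous. -/
def IterDifferentiable (𝕜 : Type*) [NontriviallyNormedField 𝕜] {F : Type*} [NormedAddCommGroup F]
    [NormedSpace 𝕜 F] (n : ℕ) (f : 𝕜 → F) : Prop :=
  ∀ k < n, Differentiable 𝕜 (deriv^[k] f)

namespace IterDifferentiable

variable {𝕜 : Type*} [NontriviallyNormedField 𝕜] {F : Type*} [NormedAddCommGroup F]
  [NormedSpace 𝕜 F] {n : ℕ}

theorem zero (f : 𝕜 → F) : IterDifferentiable 𝕜 0 f := nofun

theorem mono {f : 𝕜 → F} {n' : ℕ} (h : IterDifferentiable 𝕜 n f) (hle : n' ≤ n) :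
    IterDifferentiable 𝕜 n' f :=
  fun k hk => h k (hk.trans_le hle)

theorem succ_iff {f : 𝕜 → F} :
    IterDifferentiable 𝕜 (n + 1) f ↔ Differentiable 𝕜 f ∧ IterDifferentiable 𝕜 n (deriv f) := by
  refine ⟨fun h => ⟨h 0 n.succ_pos, fun k hk => ?_⟩, fun ⟨h0, h⟩ k hk => ?_⟩
  · simpa only [Function.iterate_succ_apply] using h (k + 1) (by omega)
  · cases k with
    | zero => exact h0
    | succ k => simpa only [Function.iterate_succ_apply] using h k (by omega)

theorem differentiable {f : 𝕜 → F} (h : IterDifferentiable 𝕜 n f) (hn : n ≠ 0) :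
    Differentiable 𝕜 f :=
  h 0 (Nat.pos_of_ne_zero hn)

theorem add {f g : 𝕜 → F} (hf : IterDifferentiable 𝕜 n f) (hg : IterDifferentiable 𝕜 n g) :
    IterDifferentiable 𝕜 n (f + g) := by
  induction n generalizing f g with
  | zero => exact zero _
  | succ n ih =>
    rw [succ_iff] at hf hg ⊢
    have hderiv : deriv (f + g) = deriv f + deriv g := funext fun t => deriv_add (hf.1 t) (hg.1 t)
    exact ⟨hf.1.add hg.1, hderiv ▸ ih hf.2 hg.2⟩

theorem mul {𝔸 : Type*} [NormedRing 𝔸] [NormedAlgebra 𝕜 𝔸] {f g : 𝕜 → 𝔸}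
    (hf : IterDifferentiable 𝕜 n f) (hg : IterDifferentiable 𝕜 n g) :
    IterDifferentiable 𝕜 n (f * g) := by
  induction n generalizing f g with
  | zero => exact zero _
  | succ n ih =>
    have hf' := hf.mono n.le_succ
    have hg' := hg.mono n.le_succ
    rw [succ_iff] at hf hg ⊢
    have hderiv : deriv (f * g) = deriv f * g + f * deriv g :=
      funext fun t => deriv_mul (hf.1 t) (hg.1 t)
    exact ⟨hf.1.mul hg.1, hderiv ▸ (ih hf.2 hg').add (ih hf' hg.2)⟩

theorem comp {a f : 𝕜 → 𝕜} (ha : IterDifferentiable 𝕜 n a) (hf : IterDifferentiable 𝕜 n f) :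
    IterDifferentiable 𝕜 n (a ∘ f) := by
  induction n generalizing a f with
  | zero => exact zero _
  | succ n ih =>
    have hf' := hf.mono n.le_succ
    rw [succ_iff] at ha hf ⊢
    have hderiv : deriv (a ∘ f) = (deriv a ∘ f) * deriv f :=
      funext fun t => deriv_comp t (ha.1 _) (hf.1 t)
    exact ⟨ha.1.comp hf.1, hderiv ▸ (ih ha.2 hf').mul hf.2⟩

end IterDifferentiable

theorem ContDiff.iterDifferentiable {𝕜 : Type*} [NontriviallyNormedField 𝕜] {F : Type*}
    [NormedAddCommGroup F] [NormedSpace 𝕜 F] {n : ℕ} {f : 𝕜 → F} (h : ContDiff 𝕜 n f) :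
    IterDifferentiable 𝕜 n f := fun k hk => by
  simpa only [iteratedDeriv_eq_iterate] using h.differentiable_iteratedDeriv k (mod_cast hk)

theorem nonneg_of_deriv_pos_of_neg {f : ℝ → ℝ} (hf : Differentiable ℝ f) (h0 : 0 ≤ f 0)
    (hderiv : ∀ t, 0 ≤ t → f t < 0 → 0 < deriv f t) {T : ℝ} (hT : 0 ≤ T) : 0 ≤ f T := by
  by_contra! hneg
  -- `s` is the last time in `[0, T]` at which `f` is nonnegative.
  set S := Icc 0 T ∩ f ⁻¹' Ici 0
  have hS : IsCompact S := isCompact_Icc.inter_right (isClosed_Ici.preimage hf.continuous)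
  have hsS : sSup S ∈ S := hS.sSup_mem ⟨0, ⟨le_rfl, hT⟩, h0⟩
  set s := sSup S
  have hneg_after : ∀ u ∈ Ioc s T, f u < 0 := fun u hu => by
    by_contra! hfu
    exact hu.1.not_ge (le_csSup hS.bddAbove ⟨⟨hsS.1.1.trans hu.1.le, hu.2⟩, hfu⟩)
  have hsT : s < T := hsS.1.2.lt_of_ne fun hsT => (hsT ▸ hneg).not_ge hsS.2
  have hmono : StrictMonoOn f (Icc s T) := by
    refine strictMonoOn_of_deriv_pos (convex_Icc s T) hf.continuous.continuousOn fun u hu => ?_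
    rw [interior_Icc] at hu
    exact hderiv u (hsS.1.1.trans hu.1.le) (hneg_after u ⟨hu.1, hu.2.le⟩)
  exact (hsS.2.trans_lt (hmono (left_mem_Icc.2 hsT.le) (right_mem_Icc.2 hsT.le) hsT)).not_ge
    hneg.le

theorem nonneg_of_deriv_add_nonneg {f a : ℝ → ℝ} (hf : Differentiable ℝ f)
    (ha : ∀ y < 0, a y < 0) (h0 : 0 ≤ f 0) (h : ∀ t, 0 ≤ t → 0 ≤ deriv f t + a (f t))
    {T : ℝ} (hT : 0 ≤ T) : 0 ≤ f T :=
  nonneg_of_deriv_pos_of_neg hf h0 (fun t ht hft => by linarith [h t ht, ha _ hft]) hT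

section HOCBF

variable {m : ℕ} {α ψ : ℕ → ℝ → ℝ}

theorem hocbf_iterDifferentiable (hα : ∀ i < m, IterDifferentiable ℝ (m - (i + 1)) (α (i + 1)))
    (hψ0 : IterDifferentiable ℝ m (ψ 0))
    (hψ : ∀ i < m, ψ (i + 1) = deriv (ψ i) + α (i + 1) ∘ ψ i) {i : ℕ} (hi : i ≤ m) :
    IterDifferentiable ℝ (m - i) (ψ i) := by
  induction i with
  | zero => exact hψ0
  | succ i ih =>
    have hψi : IterDifferentiable ℝ (m - (i + 1) + 1) (ψ i) := by
      rw [show m - (i + 1) + 1 = m - i by omega]; exact ih (by omega)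
    rw [hψ i hi]
    exact (IterDifferentiable.succ_iff.1 hψi).2.add ((hα i hi).comp (hψi.mono (by omega)))

theorem hocbf_nonneg (hα : ∀ i < m, ∀ y < 0, α (i + 1) y < 0)
    (hdiff : ∀ i < m, Differentiable ℝ (ψ i))
    (hψ : ∀ i < m, ψ (i + 1) = deriv (ψ i) + α (i + 1) ∘ ψ i)
    (hinit : ∀ i < m, 0 ≤ ψ i 0) (hconstr : ∀ t, 0 ≤ t → 0 ≤ ψ m t) {i : ℕ} (hi : i ≤ m) :
    ∀ t, 0 ≤ t → 0 ≤ ψ i t := by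
  induction hi using Nat.decreasingInduction with
  | self => exact hconstr
  | of_succ i hi ih =>
    refine fun t ht => nonneg_of_deriv_add_nonneg (hdiff i hi) (hα i hi) (hinit i hi)
      (fun u hu => ?_) ht
    simpa only [hψ i hi, Pi.add_apply, Function.comp_apply] using ih u hu

end HOCBF

theorem hocbf_constraint_transformation_general
    (n : ℕ) (b bT : (Fin n → ℝ) → ℝ)
    (himp : ∀ z : Fin n → ℝ, bT z ≥ 0 → b z ≥ 0)
    (x : ℝ → Fin n → ℝ)
    (m : ℕ)
    (α : ℕ → ℝ → ℝ)
    (hα_mono : ∀ i, 1 ≤ i → i ≤ m → StrictMono (α i))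
    (hα_zero : ∀ i, 1 ≤ i → i ≤ m → α i 0 = 0)
    (hα_smooth : ∀ i, 1 ≤ i → i ≤ m - 1 → ContDiff ℝ ((m - i : ℕ) : ℕ∞) (α i))
    (ψ : ℕ → ℝ → ℝ)
    (hψ0 : ∀ t : ℝ, ψ 0 t = bT (x t))
    (hψ0_diff : ∀ k < m, Differentiable ℝ (deriv^[k] (ψ 0)))
    (hψ_def : ∀ i, 1 ≤ i → i ≤ m →
      ∀ t : ℝ, ψ i t = deriv (ψ (i - 1)) t + α i (ψ (i - 1) t))
    (hinit : ∀ i < m, ψ i 0 ≥ 0)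
    (hconstr : ∀ t : ℝ, 0 ≤ t → ψ m t ≥ 0) :
    ∀ t : ℝ, 0 ≤ t → b (x t) ≥ 0 := by
  have hψ : ∀ i < m, ψ (i + 1) = deriv (ψ i) + α (i + 1) ∘ ψ i := fun i hi =>
    funext (hψ_def (i + 1) i.succ_pos hi)
  have hα_diff : ∀ i < m, IterDifferentiable ℝ (m - (i + 1)) (α (i + 1)) := by
    intro i hi
    rcases (show i + 1 < m ∨ i + 1 = m by omega) with hlt | rfl
    · exact (hα_smooth (i + 1) i.succ_pos (by omega)).iterDifferentiable
    · simpa only [Nat.sub_self] using IterDifferentiable.zero _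
  have hα_neg : ∀ i < m, ∀ y < 0, α (i + 1) y < 0 := fun i hi y hy =>
    hα_zero (i + 1) i.succ_pos hi ▸ hα_mono (i + 1) i.succ_pos hi hy
  have hdiff : ∀ i < m, Differentiable ℝ (ψ i) := fun i hi =>
    (hocbf_iterDifferentiable hα_diff hψ0_diff hψ hi.le).differentiable (by omega)
  intro t ht
  exact himp _ (hψ0 t ▸ hocbf_nonneg hα_neg hdiff hψ hinit hconstr (Nat.zero_le m) t ht)

/-- Theorem 3 (HOCBF based on constraint transformation).
If `b_T z ≥ 0` implies `b z ≥ 0` for every `z`, and along the trajectory `x`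
the function `ψ 0 = b_T ∘ x` is `m`-times differentiable, and the HOCBF chain
built from extended class K functions `αᵢ` satisfies `ψ i 0 ≥ 0` for `i < m`
and `ψ m t ≥ 0` for all `t ≥ 0`, then `b (x t) ≥ 0` for all `t ≥ 0`. -/
theorem hocbf_constraint_transformation
    (n : ℕ) (b bT : (Fin n → ℝ) → ℝ)
    (himp : ∀ z : Fin n → ℝ, bT z ≥ 0 → b z ≥ 0)
    (x : ℝ → Fin n → ℝ)
    (m : ℕ) (hm : 1 ≤ m)
    (α : ℕ → ℝ → ℝ)
    (hα_mono : ∀ i, 1 ≤ i → i ≤ m → StrictMono (α i))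
    (hα_zero : ∀ i, 1 ≤ i → i ≤ m → α i 0 = 0)
    (hα_smooth : ∀ i, 1 ≤ i → i ≤ m - 1 → ContDiff ℝ ((m - i : ℕ) : ℕ∞) (α i))
    (ψ : ℕ → ℝ → ℝ)
    (hψ0 : ∀ t : ℝ, ψ 0 t = bT (x t))
    (hψ0_diff : ∀ k < m, Differentiable ℝ (deriv^[k] (ψ 0)))
    (hψ_def : ∀ i, 1 ≤ i → i ≤ m →
      ∀ t : ℝ, ψ i t = deriv (ψ (i - 1)) t + α i (ψ (i - 1) t))
    (hinit : ∀ i < m, ψ i 0 ≥ 0)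
    (hconstr : ∀ t : ℝ, 0 ≤ t → ψ m t ≥ 0) :
    ∀ t : ℝ, 0 ≤ t → b (x t) ≥ 0 :=
  hocbf_constraint_transformation_general n b bT himp x m α hα_mono hα_zero hα_smooth ψ hψ0 hψ0_diff
    hψ_def hinit hconstr
end

section
/- (Control-bound enforcement via relative-degree-one CBFs on the auxiliary dynamics.) Let u : ℝ → ℝ be differentiable with u'(t) = ν(t) for all t, where ν : ℝ → ℝ, and let α, β : ℝ → ℝ be extended class K functions (strictly increasing with α(0) = β(0) = 0). Let u_min ≤ u(0) ≤ u_max. If for all t ≥ 0 both ν(t) + α(u(t) − u_min) ≥ 0 and −ν(t) + β(u_max − u(t)) ≥ 0 hold, then u_min ≤ u(t) ≤ u_max for all t ≥ 0. -/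
lemma barrier_aux (v w : ℝ → ℝ) (hv : Differentiable ℝ v)
    (hd : ∀ t, deriv v t = w t) (γ : ℝ → ℝ) (hγ : StrictMono γ)
    (hγ0 : γ 0 = 0) (h0 : 0 ≤ v 0)
    (h : ∀ t : ℝ, 0 ≤ t → 0 ≤ w t + γ (v t)) :
    ∀ t : ℝ, 0 ≤ t → 0 ≤ v t := by
  by_contra hcon
  push_neg at hcon
  obtain ⟨t1, ht1, hvt1⟩ := hcon
  have ht1pos : (0:ℝ) < t1 := by
    rcases lt_or_eq_of_le ht1 with h' | h'
    · exact h'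
    · exact absurd hvt1 (by rw [← h']; linarith)
  set S : Set ℝ := {t | t ∈ Set.Icc 0 t1 ∧ 0 ≤ v t} with hS
  have hSne : S.Nonempty := ⟨0, ⟨Set.left_mem_Icc.2 ht1, h0⟩⟩
  have hSbdd : BddAbove S := ⟨t1, fun x hx => hx.1.2⟩
  have hSclosed : IsClosed S := by
    have : S = Set.Icc 0 t1 ∩ v ⁻¹' Set.Ici 0 := rfl
    rw [this]
    exact isClosed_Icc.inter (isClosed_Ici.preimage hv.continuous)
  set s := sSup S with hs
  have hsS : s ∈ S := hSclosed.csSup_mem hSne hSbdd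
  have hst1 : s < t1 := by
    rcases lt_or_eq_of_le hsS.1.2 with h' | h'
    · exact h'
    · exact absurd hvt1 (by rw [← h']; exact not_lt.2 hsS.2)
  have hneg : ∀ t ∈ Set.Ioc s t1, v t < 0 := by
    intro t ht
    by_contra hvt
    push_neg at hvt
    have : t ∈ S := ⟨⟨le_trans hsS.1.1 ht.1.le, ht.2⟩, hvt⟩
    exact absurd (le_csSup hSbdd this) (not_le.2 ht.1)
  have hmono : StrictMonoOn v (Set.Icc s t1) := by
    apply strictMonoOn_of_deriv_pos (convex_Icc s t1) hv.continuous.continuousOn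
    intro t ht
    rw [interior_Icc] at ht
    have htpos : 0 ≤ t := le_trans hsS.1.1 ht.1.le
    have hvneg : v t < 0 := hneg t ⟨ht.1, ht.2.le⟩
    have : γ (v t) < 0 := by rw [← hγ0]; exact hγ hvneg
    have := h t htpos
    rw [hd t]
    linarith
  have : v s < v t1 := hmono (Set.left_mem_Icc.2 hst1.le)
    (Set.right_mem_Icc.2 hst1.le) hst1
  linarith [hsS.2]

/-- Control-bound enforcement via relative-degree-one CBFs on the auxiliary
dynamics `u' = ν`: if `α, β` are extended class K functions,
`u_min ≤ u 0 ≤ u_max`, and for all `t ≥ 0` both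
`ν t + α (u t − u_min) ≥ 0` and `−ν t + β (u_max − u t) ≥ 0`,
then `u_min ≤ u t ≤ u_max` for all `t ≥ 0`. -/
theorem control_bounds_via_cbf
    (u ν : ℝ → ℝ) (hu : Differentiable ℝ u)
    (hdyn : ∀ t : ℝ, deriv u t = ν t)
    (α β : ℝ → ℝ)
    (hα_mono : StrictMono α) (hα_zero : α 0 = 0)
    (hβ_mono : StrictMono β) (hβ_zero : β 0 = 0)
    (umin umax : ℝ)
    (h0 : umin ≤ u 0 ∧ u 0 ≤ umax)
    (hmin : ∀ t : ℝ, 0 ≤ t → ν t + α (u t - umin) ≥ 0)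
    (hmax : ∀ t : ℝ, 0 ≤ t → -ν t + β (umax - u t) ≥ 0) :
    ∀ t : ℝ, 0 ≤ t → umin ≤ u t ∧ u t ≤ umax := by
  have hlo := barrier_aux (fun t => u t - umin) ν
    (hu.sub_const umin)
    (by intro t; rw [deriv_sub_const]; exact hdyn t)
    α hα_mono hα_zero (by simpa using h0.1)
    (by intro t ht; simpa using hmin t ht)
  have hhi := barrier_aux (fun t => umax - u t) (fun t => -ν t)
    ((differentiable_const umax).sub hu)
    (by intro t; rw [deriv_const_sub]; rw [hdyn t])
    β hβ_mono hβ_zero (by simpa using h0.2)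
    (by intro t ht; simpa using hmax t ht)
  intro t ht
  have h1 := hlo t ht
  have h2 := hhi t ht
  constructor <;> linarith
end

section
/- (Second-order HOCBF with linear class K functions.) Let ψ : ℝ → ℝ be twice differentiable. If ψ(0) ≥ 0, ψ'(0) + ψ(0) ≥ 0, and ψ''(t) + 2ψ'(t) + ψ(t) ≥ 0 for all t ≥ 0, then ψ(t) ≥ 0 and ψ'(t) + ψ(t) ≥ 0 for all t ≥ 0. -/
/-! Both conclusions come from one first-order comparison: if `f a ≥ 0` and `f' + c f ≥ 0` on
`[a, ∞)`, then `exp (c t) * f t` is monotone there, so `f` stays nonnegative. Apply it first to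
`φ = ψ' + ψ`, for which `φ' + φ = ψ'' + 2ψ' + ψ`, and then to `ψ` itself. -/

open Real Set

theorem monotoneOn_exp_mul_of_deriv_add_mul_nonneg {f : ℝ → ℝ} (hf : Differentiable ℝ f)
    {a c : ℝ} (h : ∀ t, a ≤ t → 0 ≤ deriv f t + c * f t) :
    MonotoneOn (fun t => exp (c * t) * f t) (Ici a) := by
  have hg : Differentiable ℝ fun t => exp (c * t) * f t := by fun_prop
  refine monotoneOn_of_deriv_nonneg (convex_Ici a) hg.continuous.continuousOn
    hg.differentiableOn fun t ht => ?_
  rw [interior_Ici] at ht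
  have hderiv : deriv (fun t => exp (c * t) * f t) t = exp (c * t) * (deriv f t + c * f t) := by
    have hexp : HasDerivAt (fun t => exp (c * t)) (exp (c * t) * c) t := by
      simpa using ((hasDerivAt_id t).const_mul c).exp
    rw [(hexp.fun_mul (hf t).hasDerivAt).deriv]
    ring
  rw [hderiv]
  exact mul_nonneg (exp_pos _).le (h t (le_of_lt ht))

theorem nonneg_of_deriv_add_mul_nonneg {f : ℝ → ℝ} (hf : Differentiable ℝ f) {a c : ℝ}
    (ha : 0 ≤ f a) (h : ∀ t, a ≤ t → 0 ≤ deriv f t + c * f t) {t : ℝ} (ht : a ≤ t) :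
    0 ≤ f t := by
  have hmono := monotoneOn_exp_mul_of_deriv_add_mul_nonneg hf h self_mem_Ici ht ht
  have : 0 ≤ exp (c * t) * f t := le_trans (mul_nonneg (exp_pos _).le ha) hmono
  exact nonneg_of_mul_nonneg_right this (exp_pos _)

/-- Second-order HOCBF with linear class K functions: if `ψ` is twice
differentiable, `ψ 0 ≥ 0`, `ψ' 0 + ψ 0 ≥ 0`, and
`ψ'' t + 2 ψ' t + ψ t ≥ 0` for all `t ≥ 0`, then `ψ t ≥ 0` and
`ψ' t + ψ t ≥ 0` for all `t ≥ 0`. -/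
theorem hocbf_second_order_linear
    (ψ : ℝ → ℝ)
    (hψ : Differentiable ℝ ψ) (hψ' : Differentiable ℝ (deriv ψ))
    (h0 : ψ 0 ≥ 0)
    (h1 : deriv ψ 0 + ψ 0 ≥ 0)
    (hconstr : ∀ t : ℝ, 0 ≤ t →
      deriv (deriv ψ) t + 2 * deriv ψ t + ψ t ≥ 0) :
    ∀ t : ℝ, 0 ≤ t → ψ t ≥ 0 ∧ deriv ψ t + ψ t ≥ 0 := by
  have hφ : Differentiable ℝ (deriv ψ + ψ) := hψ'.add hψ
  have hC₂ : ∀ t, 0 ≤ t → 0 ≤ deriv ψ t + ψ t := by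
    refine fun t ht => nonneg_of_deriv_add_mul_nonneg (c := 1) hφ h1 (fun s hs => ?_) ht
    rw [deriv_add (hψ' s) (hψ s)]
    simpa only [Pi.add_apply, one_mul, two_mul, ← add_assoc] using hconstr s hs
  have hC₁ : ∀ t, 0 ≤ t → 0 ≤ ψ t := fun t ht =>
    nonneg_of_deriv_add_mul_nonneg (c := 1) hψ h0 (fun s hs => by simpa using hC₂ s hs) ht
  exact fun t ht => ⟨hC₁ t ht, hC₂ t ht⟩
end

section
/- (Third-order HOCBF with linear class K functions.) Let ψ : ℝ → ℝ be three times differentiable. If ψ(0) ≥ 0, ψ'(0) + ψ(0) ≥ 0, ψ''(0) + 2ψ'(0) + ψ(0) ≥ 0, and ψ'''(t) + 3ψ''(t) + 3ψ'(t) + ψ(t) ≥ 0 for all t ≥ 0, then ψ(t) ≥ 0, ψ'(t) + ψ(t) ≥ 0, and ψ''(t) + 2ψ'(t) + ψ(t) ≥ 0 for all t ≥ 0. -/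
/-!
Each of the three sets is forward invariant by the same one-dimensional comparison argument:
if `g a ≥ 0` and `g' + k g ≥ 0` on `[a, ∞)`, then `t ↦ exp (k t) g t` has nonnegative derivative
there, so it stays above its initial value `g a ≥ 0`. Apply this to
`ψ'' + 2ψ' + ψ` (whose derivative plus itself is the HOCBF constraint), then to `ψ' + ψ`,
and finally to `ψ`.
-/

open Set

theorem nonneg_of_hasDerivAt_add_mul_nonneg {g g' : ℝ → ℝ} {a k : ℝ}
    (hg : ∀ t, HasDerivAt g (g' t) t) (ha : 0 ≤ g a)
    (h : ∀ t, a ≤ t → 0 ≤ g' t + k * g t) {t : ℝ} (ht : a ≤ t) : 0 ≤ g t := by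
  have hweighted : ∀ s, HasDerivAt (fun u => Real.exp (k * u) * g u)
      (Real.exp (k * s) * (g' s + k * g s)) s := fun s =>
    ((hasDerivAt_const_mul k).exp.mul (hg s)).congr_deriv (by ring)
  have hmono : MonotoneOn (fun u => Real.exp (k * u) * g u) (Ici a) := by
    refine monotoneOn_of_hasDerivWithinAt_nonneg (convex_Ici a)
      (fun s _ => (hweighted s).continuousAt.continuousWithinAt)
      (fun s _ => (hweighted s).hasDerivWithinAt) fun s hs => ?_
    rw [interior_Ici] at hs
    exact mul_nonneg (Real.exp_pos _).le (h s (le_of_lt hs))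
  have hle : Real.exp (k * a) * g a ≤ Real.exp (k * t) * g t :=
    hmono self_mem_Ici ht ht
  exact nonneg_of_mul_nonneg_right
    ((mul_nonneg (Real.exp_pos _).le ha).trans hle) (Real.exp_pos _)

/-- Third-order HOCBF with linear class K functions: if `ψ` is three times
differentiable, `ψ 0 ≥ 0`, `ψ' 0 + ψ 0 ≥ 0`, `ψ'' 0 + 2 ψ' 0 + ψ 0 ≥ 0`,
and `ψ''' t + 3 ψ'' t + 3 ψ' t + ψ t ≥ 0` for all `t ≥ 0`, then
`ψ t ≥ 0`, `ψ' t + ψ t ≥ 0` and `ψ'' t + 2 ψ' t + ψ t ≥ 0` for all `t ≥ 0`. -/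
theorem hocbf_third_order_linear
    (ψ : ℝ → ℝ)
    (hψ : Differentiable ℝ ψ) (hψ' : Differentiable ℝ (deriv ψ))
    (hψ'' : Differentiable ℝ (deriv (deriv ψ)))
    (h0 : ψ 0 ≥ 0)
    (h1 : deriv ψ 0 + ψ 0 ≥ 0)
    (h2 : deriv (deriv ψ) 0 + 2 * deriv ψ 0 + ψ 0 ≥ 0)
    (hconstr : ∀ t : ℝ, 0 ≤ t →
      deriv (deriv (deriv ψ)) t + 3 * deriv (deriv ψ) t
        + 3 * deriv ψ t + ψ t ≥ 0) :
    ∀ t : ℝ, 0 ≤ t → ψ t ≥ 0 ∧ deriv ψ t + ψ t ≥ 0 ∧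
      deriv (deriv ψ) t + 2 * deriv ψ t + ψ t ≥ 0 := by
  have hC₃ : ∀ t, 0 ≤ t → 0 ≤ deriv (deriv ψ) t + 2 * deriv ψ t + ψ t :=
    fun _ => nonneg_of_hasDerivAt_add_mul_nonneg (k := 1)
      (fun s => ((hψ'' s).hasDerivAt.fun_add ((hψ' s).hasDerivAt.const_mul 2)).fun_add
        (hψ s).hasDerivAt)
      h2 fun s hs => by linarith [hconstr s hs]
  have hC₂ : ∀ t, 0 ≤ t → 0 ≤ deriv ψ t + ψ t :=
    fun _ => nonneg_of_hasDerivAt_add_mul_nonneg (k := 1)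
      (fun s => (hψ' s).hasDerivAt.fun_add (hψ s).hasDerivAt) h1
      fun s hs => by linarith [hC₃ s hs]
  have hC₁ : ∀ t, 0 ≤ t → 0 ≤ ψ t :=
    fun _ => nonneg_of_hasDerivAt_add_mul_nonneg (k := 1)
      (fun s => (hψ s).hasDerivAt) h0 fun s hs => by linarith [hC₂ s hs]
  exact fun t ht => ⟨hC₁ t ht, hC₂ t ht, hC₃ t ht⟩
end

section
/- (Second Lie derivative of the distance constraint for the unicycle: u₂ appears, u₁ does not.) Along any solution of the unicycle model, ρ is twice differentiable and for all t, ρ''(t) = (p(t)/(M·ρ(t)))·u₂(t) + v(t)²/ρ(t) + v(t)·φ(t)·q(t)/ρ(t) − v(t)²·p(t)²/ρ(t)³. In particular the control input u₂ appears linearly with coefficient p/(Mρ) and u₁ does not appear, so the relative degree of the safety constraint ρ − r ≥ 0 with respect to u₂ is 2. -/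
/-!
Differentiating `ρ² = (x - x₀)² + (y - y₀)²` gives `ρ ρ' = v p`: the velocity is `v` times the
heading vector `(cos θ, sin θ)`, and `p` is the component of the offset along it. The heading
frame turns at rate `θ' = φ`, so `p' = v + φ q`. The quotient rule applied to `ρ' = v p / ρ` then
gives `ρ''`, in which `u₂` enters through `v' = u₂ / M` while `u₁ = φ'` cannot appear, because
`ρ'` involves neither `φ` nor its derivative.
-/

open Real

theorem HasDerivAt.sqrt_sq_add_sq {f g : ℝ → ℝ} {f' g' t : ℝ} (hf : HasDerivAt f f' t)
    (hg : HasDerivAt g g' t) (h : f t ^ 2 + g t ^ 2 ≠ 0) :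
    HasDerivAt (fun s => √(f s ^ 2 + g s ^ 2)) ((f t * f' + g t * g') / √(f t ^ 2 + g t ^ 2)) t :=
  ((hf.fun_pow 2).fun_add (hg.fun_pow 2)).sqrt h |>.congr_deriv (by field_simp; push_cast; ring)

theorem HasDerivAt.mul_cos_add_mul_sin {f g θ : ℝ → ℝ} {f' g' ω t : ℝ} (hf : HasDerivAt f f' t)
    (hg : HasDerivAt g g' t) (hθ : HasDerivAt θ ω t) :
    HasDerivAt (fun s => f s * Real.cos (θ s) + g s * Real.sin (θ s))
      (f' * Real.cos (θ t) + g' * Real.sin (θ t) +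
        ω * (-f t * Real.sin (θ t) + g t * Real.cos (θ t))) t :=
  ((hf.fun_mul hθ.cos).fun_add (hg.fun_mul hθ.sin)).congr_deriv (by ring)

section Unicycle

variable {x y v θ : ℝ → ℝ} {x₀ y₀ t : ℝ}

theorem unicycle_hasDerivAt_dist (hx : HasDerivAt x (v t * cos (θ t)) t)
    (hy : HasDerivAt y (v t * sin (θ t)) t) (h : (x t - x₀) ^ 2 + (y t - y₀) ^ 2 ≠ 0) :
    HasDerivAt (fun s => √((x s - x₀) ^ 2 + (y s - y₀) ^ 2))
      (v t * ((x t - x₀) * cos (θ t) + (y t - y₀) * sin (θ t)) /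
        √((x t - x₀) ^ 2 + (y t - y₀) ^ 2)) t := by
  convert (hx.sub_const x₀).sqrt_sq_add_sq (hy.sub_const y₀) h using 2
  ring

theorem unicycle_hasDerivAt_radial {ω : ℝ} (hx : HasDerivAt x (v t * cos (θ t)) t)
    (hy : HasDerivAt y (v t * sin (θ t)) t) (hθ : HasDerivAt θ ω t) :
    HasDerivAt (fun s => (x s - x₀) * cos (θ s) + (y s - y₀) * sin (θ s))
      (v t + ω * (-(x t - x₀) * sin (θ t) + (y t - y₀) * cos (θ t))) t := by
  convert (hx.sub_const x₀).mul_cos_add_mul_sin (hy.sub_const y₀) hθ using 1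
  linear_combination -(v t) * sin_sq_add_cos_sq (θ t)

end Unicycle

theorem unicycle_rho_second_derivative_general
    (M : ℝ)
    (x y v θ φ u₂ : ℝ → ℝ)
    (hx : Differentiable ℝ x) (hy : Differentiable ℝ y)
    (hv : Differentiable ℝ v) (hθ : Differentiable ℝ θ)
    (hdx : ∀ t, deriv x t = v t * Real.cos (θ t))
    (hdy : ∀ t, deriv y t = v t * Real.sin (θ t))
    (hdv : ∀ t, deriv v t = u₂ t / M)
    (hdθ : ∀ t, deriv θ t = φ t)
    (x₀ y₀ : ℝ) (ρ p q : ℝ → ℝ)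
    (hρ : ∀ t, ρ t = Real.sqrt ((x t - x₀) ^ 2 + (y t - y₀) ^ 2))
    (hp : ∀ t, p t = (x t - x₀) * Real.cos (θ t) + (y t - y₀) * Real.sin (θ t))
    (hq : ∀ t, q t = -(x t - x₀) * Real.sin (θ t) + (y t - y₀) * Real.cos (θ t))
    (hρpos : ∀ t, 0 < ρ t)
    : (Differentiable ℝ ρ ∧ Differentiable ℝ (deriv ρ)) ∧
      ∀ t, deriv (deriv ρ) t =
        (p t / (M * ρ t)) * u₂ t + (v t) ^ 2 / ρ t
          + v t * φ t * q t / ρ t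
          - (v t) ^ 2 * (p t) ^ 2 / (ρ t) ^ 3 := by
  have hx' t := hdx t ▸ (hx t).hasDerivAt
  have hy' t := hdy t ▸ (hy t).hasDerivAt
  have hρ' t : HasDerivAt ρ (v t * p t / ρ t) t := by
    have hS : (x t - x₀) ^ 2 + (y t - y₀) ^ 2 ≠ 0 := (sqrt_pos.mp (hρ t ▸ hρpos t)).ne'
    rw [hρ t, hp t, funext hρ]
    exact unicycle_hasDerivAt_dist (hx' t) (hy' t) hS
  have hp' t : HasDerivAt p (v t + φ t * q t) t := by
    rw [funext hp, hq t]
    exact unicycle_hasDerivAt_radial (hx' t) (hy' t) (hdθ t ▸ (hθ t).hasDerivAt)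
  have hρ'' t := ((hdv t ▸ (hv t).hasDerivAt).fun_mul (hp' t)).fun_div (hρ' t) (hρpos t).ne'
  rw [show deriv ρ = fun t => v t * p t / ρ t from funext fun t => (hρ' t).deriv]
  refine ⟨⟨fun t => (hρ' t).differentiableAt, fun t => (hρ'' t).differentiableAt⟩, fun t => ?_⟩
  rw [(hρ'' t).deriv]
  have hρne := (hρpos t).ne'
  field_simp
  ring

/-- Second Lie derivative of the distance constraint for the unicycle:
`ρ` is twice differentiable and
`ρ'' = (p/(M ρ)) u₂ + v²/ρ + v φ q / ρ − v² p² / ρ³`;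
the control `u₂` appears linearly with coefficient `p/(M ρ)` and `u₁` does not. -/
theorem unicycle_rho_second_derivative
    (M : ℝ) (hM : 0 < M)
    (x y v θ φ u₁ u₂ : ℝ → ℝ)
    (hx : Differentiable ℝ x) (hy : Differentiable ℝ y)
    (hv : Differentiable ℝ v) (hθ : Differentiable ℝ θ)
    (hφ : Differentiable ℝ φ)
    (hu₁ : Continuous u₁) (hu₂ : Continuous u₂)
    (hdx : ∀ t, deriv x t = v t * Real.cos (θ t))
    (hdy : ∀ t, deriv y t = v t * Real.sin (θ t))
    (hdv : ∀ t, deriv v t = u₂ t / M)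
    (hdθ : ∀ t, deriv θ t = φ t)
    (hdφ : ∀ t, deriv φ t = u₁ t)
    (x₀ y₀ : ℝ) (ρ p q : ℝ → ℝ)
    (hρ : ∀ t, ρ t = Real.sqrt ((x t - x₀) ^ 2 + (y t - y₀) ^ 2))
    (hp : ∀ t, p t = (x t - x₀) * Real.cos (θ t) + (y t - y₀) * Real.sin (θ t))
    (hq : ∀ t, q t = -(x t - x₀) * Real.sin (θ t) + (y t - y₀) * Real.cos (θ t))
    (hρpos : ∀ t, 0 < ρ t)
    : (Differentiable ℝ ρ ∧ Differentiable ℝ (deriv ρ)) ∧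
      ∀ t, deriv (deriv ρ) t =
        (p t / (M * ρ t)) * u₂ t + (v t) ^ 2 / ρ t
          + v t * φ t * q t / ρ t
          - (v t) ^ 2 * (p t) ^ 2 / (ρ t) ^ 3 :=
  unicycle_rho_second_derivative_general M x y v θ φ u₂ hx hy hv hθ hdx hdy hdv hdθ x₀ y₀ ρ p q hρ
    hp hq hρpos
end

section
/- (Third Lie derivative of the distance constraint for the unicycle: u₁ appears, together with the derivative of u₂.) Along any solution of the unicycle model in which additionally u₂ is differentiable, ρ is three times differentiable and for all t, ρ'''(t) = (v q/ρ)·u₁ + (p/(Mρ))·u₂' + (u₂/M)·((3v + 2φq)/ρ − 3v p²/ρ³) − v φ² p/ρ − 3v³ p/ρ³ − 3v² φ p q/ρ³ + 3v³ p³/ρ⁵ (all functions evaluated at t). In particular u₁ appears linearly with coefficient v q/ρ and the derivative u₂' of u₂ appears with coefficient p/(Mρ), so the relative degree of the safety constraint ρ − r ≥ 0 with respect to u₁ is 3 and the relative degree set is S = {3, 2}. -/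
/-!
In body coordinates `(p, q)` the position relative to the obstacle centre obeys
`p' = v + φ q`, `q' = -φ p`, and `ρ² = p² + q²` gives `ρ' = v p / ρ`. Hence every derivative of
`ρ` is a rational expression in `v, p, q, ρ, φ`, the acceleration `a = u₂ / M` and their
derivatives, and two applications of the quotient rule produce `ρ'''`.
-/

open Real

noncomputable def radialVelocity (v p ρ : ℝ → ℝ) (t : ℝ) : ℝ :=
  v t * p t / ρ t

/-- `ρ''`, where `a` stands for `v'`. -/
noncomputable def radialAcceleration (v p q ρ φ a : ℝ → ℝ) (t : ℝ) : ℝ :=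
  (a t * p t + v t ^ 2 + v t * φ t * q t) / ρ t - v t ^ 2 * p t ^ 2 / ρ t ^ 3

section BodyFrame

variable {x y θ p q ρ : ℝ → ℝ} {x₀ y₀ v ω t : ℝ}

theorem hasDerivAt_bodyFrame_fst (hx : HasDerivAt x (v * cos (θ t)) t)
    (hy : HasDerivAt y (v * sin (θ t)) t) (hθ : HasDerivAt θ ω t)
    (hp : ∀ s, p s = (x s - x₀) * cos (θ s) + (y s - y₀) * sin (θ s))
    (hq : q t = -(x t - x₀) * sin (θ t) + (y t - y₀) * cos (θ t)) :
    HasDerivAt p (v + ω * q t) t := by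
  rw [funext hp]
  refine (((hx.sub_const x₀).mul hθ.cos).add ((hy.sub_const y₀).mul hθ.sin)).congr_deriv ?_
  rw [hq]
  linear_combination v * sin_sq_add_cos_sq (θ t)

theorem hasDerivAt_bodyFrame_snd (hx : HasDerivAt x (v * cos (θ t)) t)
    (hy : HasDerivAt y (v * sin (θ t)) t) (hθ : HasDerivAt θ ω t)
    (hp : p t = (x t - x₀) * cos (θ t) + (y t - y₀) * sin (θ t))
    (hq : ∀ s, q s = -(x s - x₀) * sin (θ s) + (y s - y₀) * cos (θ s)) :
    HasDerivAt q (-(ω * p t)) t := by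
  rw [funext hq]
  refine (((hx.sub_const x₀).neg.mul hθ.sin).add ((hy.sub_const y₀).mul hθ.cos)).congr_deriv ?_
  simp only [Pi.neg_apply, hp]
  ring

theorem hasDerivAt_bodyFrame_dist (hx : HasDerivAt x (v * cos (θ t)) t)
    (hy : HasDerivAt y (v * sin (θ t)) t)
    (hρ : ∀ s, ρ s = √((x s - x₀) ^ 2 + (y s - y₀) ^ 2))
    (hp : p t = (x t - x₀) * cos (θ t) + (y t - y₀) * sin (θ t)) (hρt : ρ t ≠ 0) :
    HasDerivAt ρ (v * p t / ρ t) t := by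
  have hsq : (x t - x₀) ^ 2 + (y t - y₀) ^ 2 ≠ 0 := by
    rintro h
    exact hρt (by rw [hρ, h, sqrt_zero])
  rw [funext hρ]
  refine ((((hx.sub_const x₀).pow 2).add ((hy.sub_const y₀).pow 2)).sqrt hsq).congr_deriv ?_
  simp only [Pi.add_apply, Pi.pow_apply, ← hρ, hp]
  field_simp
  ring

end BodyFrame

section DistanceDerivatives

variable {v p q ρ φ a : ℝ → ℝ} {a' u t : ℝ}

theorem hasDerivAt_radialVelocity (hv : HasDerivAt v (a t) t)
    (hp : HasDerivAt p (v t + φ t * q t) t) (hρ : HasDerivAt ρ (v t * p t / ρ t) t)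
    (hρt : ρ t ≠ 0) :
    HasDerivAt (radialVelocity v p ρ) (radialAcceleration v p q ρ φ a t) t := by
  refine ((hv.mul hp).div hρ hρt).congr_deriv ?_
  simp only [radialAcceleration, Pi.mul_apply]
  field_simp
  ring

theorem hasDerivAt_radialAcceleration (hv : HasDerivAt v (a t) t)
    (hp : HasDerivAt p (v t + φ t * q t) t) (hq : HasDerivAt q (-(φ t * p t)) t)
    (hρ : HasDerivAt ρ (v t * p t / ρ t) t) (hφ : HasDerivAt φ u t) (ha : HasDerivAt a a' t)
    (hρt : ρ t ≠ 0) :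
    HasDerivAt (radialAcceleration v p q ρ φ a)
      ((a' * p t + 3 * a t * v t + 2 * a t * φ t * q t + v t * q t * u
          - v t * φ t ^ 2 * p t) / ρ t
        - 3 * (a t * v t * p t ^ 2 + v t ^ 3 * p t + v t ^ 2 * φ t * p t * q t) / ρ t ^ 3
        + 3 * v t ^ 3 * p t ^ 3 / ρ t ^ 5) t := by
  have hnum := ((ha.mul hp).add (hv.pow 2)).add ((hv.mul hφ).mul hq)
  have hρ3 : ρ t ^ 3 ≠ 0 := pow_ne_zero 3 hρt
  refine ((hnum.div hρ hρt).sub (((hv.pow 2).mul (hp.pow 2)).div (hρ.pow 3) hρ3)).congr_deriv ?_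
  simp only [Pi.mul_apply, Pi.add_apply, Pi.pow_apply]
  field_simp
  ring

end DistanceDerivatives

theorem unicycle_rho_third_derivative_general
    (M : ℝ)
    (x y v θ φ u₁ u₂ : ℝ → ℝ)
    (hx : Differentiable ℝ x) (hy : Differentiable ℝ y)
    (hv : Differentiable ℝ v) (hθ : Differentiable ℝ θ)
    (hφ : Differentiable ℝ φ)
    (hdx : ∀ t, deriv x t = v t * Real.cos (θ t))
    (hdy : ∀ t, deriv y t = v t * Real.sin (θ t))
    (hdv : ∀ t, deriv v t = u₂ t / M)
    (hdθ : ∀ t, deriv θ t = φ t)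
    (hdφ : ∀ t, deriv φ t = u₁ t)
    (hu₂d : Differentiable ℝ u₂)
    (x₀ y₀ : ℝ) (ρ p q : ℝ → ℝ)
    (hρ : ∀ t, ρ t = Real.sqrt ((x t - x₀) ^ 2 + (y t - y₀) ^ 2))
    (hp : ∀ t, p t = (x t - x₀) * Real.cos (θ t) + (y t - y₀) * Real.sin (θ t))
    (hq : ∀ t, q t = -(x t - x₀) * Real.sin (θ t) + (y t - y₀) * Real.cos (θ t))
    (hρpos : ∀ t, 0 < ρ t)
    : (Differentiable ℝ ρ ∧ Differentiable ℝ (deriv ρ) ∧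
        Differentiable ℝ (deriv (deriv ρ))) ∧
      ∀ t, deriv (deriv (deriv ρ)) t =
        (v t * q t / ρ t) * u₁ t
          + (p t / (M * ρ t)) * deriv u₂ t
          + (u₂ t / M) * ((3 * v t + 2 * φ t * q t) / ρ t
              - 3 * v t * (p t) ^ 2 / (ρ t) ^ 3)
          - v t * (φ t) ^ 2 * p t / ρ t
          - 3 * (v t) ^ 3 * p t / (ρ t) ^ 3
          - 3 * (v t) ^ 2 * φ t * p t * q t / (ρ t) ^ 3
          + 3 * (v t) ^ 3 * (p t) ^ 3 / (ρ t) ^ 5 := by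
  have hxd t : HasDerivAt x (v t * cos (θ t)) t := hdx t ▸ (hx t).hasDerivAt
  have hyd t : HasDerivAt y (v t * sin (θ t)) t := hdy t ▸ (hy t).hasDerivAt
  have hvd t : HasDerivAt v (u₂ t / M) t := hdv t ▸ (hv t).hasDerivAt
  have hθd t : HasDerivAt θ (φ t) t := hdθ t ▸ (hθ t).hasDerivAt
  have hφd t : HasDerivAt φ (u₁ t) t := hdφ t ▸ (hφ t).hasDerivAt
  have hρ0 t : ρ t ≠ 0 := (hρpos t).ne'
  have hpd t := hasDerivAt_bodyFrame_fst (hxd t) (hyd t) (hθd t) hp (hq t)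
  have hqd t := hasDerivAt_bodyFrame_snd (hxd t) (hyd t) (hθd t) (hp t) hq
  have hρd t := hasDerivAt_bodyFrame_dist (hxd t) (hyd t) hρ (hp t) (hρ0 t)
  have hρ' : deriv ρ = radialVelocity v p ρ := funext fun t => (hρd t).deriv
  have hρ''d t := hρ' ▸ hasDerivAt_radialVelocity (a := (u₂ · / M)) (hvd t) (hpd t) (hρd t) (hρ0 t)
  have hρ'' : deriv (deriv ρ) = radialAcceleration v p q ρ φ (u₂ · / M) :=
    funext fun t => (hρ''d t).deriv
  have hρ'''d t := hρ'' ▸ hasDerivAt_radialAcceleration (a := (u₂ · / M)) (hvd t) (hpd t) (hqd t) (hρd t)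
    (hφd t) ((hu₂d t).hasDerivAt.div_const M) (hρ0 t)
  refine ⟨⟨fun t => (hρd t).differentiableAt, fun t => (hρ''d t).differentiableAt,
    fun t => (hρ'''d t).differentiableAt⟩, fun t => ?_⟩
  rw [(hρ'''d t).deriv]
  ring

/-- Third Lie derivative of the distance constraint for the unicycle
(with `u₂` differentiable): `u₁` appears linearly with coefficient `v q / ρ`
and the derivative of `u₂` appears with coefficient `p/(M ρ)`. -/
theorem unicycle_rho_third_derivative
    (M : ℝ) (hM : 0 < M)
    (x y v θ φ u₁ u₂ : ℝ → ℝ)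
    (hx : Differentiable ℝ x) (hy : Differentiable ℝ y)
    (hv : Differentiable ℝ v) (hθ : Differentiable ℝ θ)
    (hφ : Differentiable ℝ φ)
    (hu₁ : Continuous u₁) (hu₂ : Continuous u₂)
    (hdx : ∀ t, deriv x t = v t * Real.cos (θ t))
    (hdy : ∀ t, deriv y t = v t * Real.sin (θ t))
    (hdv : ∀ t, deriv v t = u₂ t / M)
    (hdθ : ∀ t, deriv θ t = φ t)
    (hdφ : ∀ t, deriv φ t = u₁ t)
    (hu₂d : Differentiable ℝ u₂)
    (x₀ y₀ : ℝ) (ρ p q : ℝ → ℝ)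
    (hρ : ∀ t, ρ t = Real.sqrt ((x t - x₀) ^ 2 + (y t - y₀) ^ 2))
    (hp : ∀ t, p t = (x t - x₀) * Real.cos (θ t) + (y t - y₀) * Real.sin (θ t))
    (hq : ∀ t, q t = -(x t - x₀) * Real.sin (θ t) + (y t - y₀) * Real.cos (θ t))
    (hρpos : ∀ t, 0 < ρ t)
    : (Differentiable ℝ ρ ∧ Differentiable ℝ (deriv ρ) ∧
        Differentiable ℝ (deriv (deriv ρ))) ∧
      ∀ t, deriv (deriv (deriv ρ)) t =
        (v t * q t / ρ t) * u₁ t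
          + (p t / (M * ρ t)) * deriv u₂ t
          + (u₂ t / M) * ((3 * v t + 2 * φ t * q t) / ρ t
              - 3 * v t * (p t) ^ 2 / (ρ t) ^ 3)
          - v t * (φ t) ^ 2 * p t / ρ t
          - 3 * (v t) ^ 3 * p t / (ρ t) ^ 3
          - 3 * (v t) ^ 2 * φ t * p t * q t / (ρ t) ^ 3
          + 3 * (v t) ^ 3 * (p t) ^ 3 / (ρ t) ^ 5 :=
  unicycle_rho_third_derivative_general M x y v θ φ u₁ u₂ hx hy hv hθ hφ hdx hdy hdv hdθ hdφ hu₂d x₀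
    y₀ ρ p q hρ hp hq hρpos
end

section
/- (Second Lie derivative of the transformed distance constraint for the unicycle: both controls appear.) Along any solution of the unicycle model, the transformed distance D is twice differentiable and for all t, D''(t) = (P/(M·D))·u₂ + (d·Q/D)·u₁ + (v·(v + φ·Q) + d·φ·(d·φ − φ·P))/D − (v·P + d·φ·Q)²/D³ (all functions evaluated at t). In particular both control inputs u₁ and u₂ appear linearly, with coefficients d·Q/D and P/(M·D) respectively, so the transformed constraint has unique relative degree 2 with respect to both control components. -/
/-!
Write the position of the geometric centre relative to the obstacle in the body frame: `P` and `Q`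
are its coordinates along and across the heading, so `D² = P² + Q²`. In that frame the centre moves
with velocity `(v, d φ)` while the frame itself turns at rate `φ`, which gives `P' = v + φ Q` and
`Q' = d φ - φ P`. Hence `D D' = P P' + Q Q' = v P + d φ Q`, and differentiating `D' = N / D` once
more, with `N = v P + d φ Q`, yields `D'' = N' / D - N² / D³`, where `N'` carries `v' = u₂ / M`
and `φ' = u₁`.
-/

open Real

section RotatingFrame

variable {A B θ : ℝ → ℝ} {p q ω t : ℝ}

/-- `(p, q)` are the body-frame components of the velocity `(A', B')`. -/
theorem HasDerivAt.rotate_fst (hA : HasDerivAt A (p * Real.cos (θ t) - q * Real.sin (θ t)) t)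
    (hB : HasDerivAt B (p * Real.sin (θ t) + q * Real.cos (θ t)) t) (hθ : HasDerivAt θ ω t) :
    HasDerivAt (fun s => A s * Real.cos (θ s) + B s * Real.sin (θ s))
      (p + ω * (-A t * Real.sin (θ t) + B t * Real.cos (θ t))) t := by
  refine ((hA.fun_mul hθ.cos).fun_add (hB.fun_mul hθ.sin)).congr_deriv ?_
  linear_combination p * Real.sin_sq_add_cos_sq (θ t)

theorem HasDerivAt.rotate_snd (hA : HasDerivAt A (p * Real.cos (θ t) - q * Real.sin (θ t)) t)
    (hB : HasDerivAt B (p * Real.sin (θ t) + q * Real.cos (θ t)) t) (hθ : HasDerivAt θ ω t) :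
    HasDerivAt (fun s => -A s * Real.sin (θ s) + B s * Real.cos (θ s))
      (q - ω * (A t * Real.cos (θ t) + B t * Real.sin (θ t))) t := by
  refine ((hA.fun_neg.fun_mul hθ.sin).fun_add (hB.fun_mul hθ.cos)).congr_deriv ?_
  linear_combination q * Real.sin_sq_add_cos_sq (θ t)

end RotatingFrame

theorem sq_add_sq_rotate (a b c s : ℝ) (h : s ^ 2 + c ^ 2 = 1) :
    (a * c + b * s) ^ 2 + (-a * s + b * c) ^ 2 = a ^ 2 + b ^ 2 := by
  linear_combination (a ^ 2 + b ^ 2) * h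

theorem HasDerivAt.sqrt_sq_add_sq_s10 {P Q : ℝ → ℝ} {p q t : ℝ} (hP : HasDerivAt P p t)
    (hQ : HasDerivAt Q q t) (hpos : 0 < P t ^ 2 + Q t ^ 2) :
    HasDerivAt (fun s => √(P s ^ 2 + Q s ^ 2)) ((P t * p + Q t * q) / √(P t ^ 2 + Q t ^ 2)) t := by
  refine (((hP.fun_pow 2).fun_add (hQ.fun_pow 2)).sqrt hpos.ne').congr_deriv ?_
  have hsqrt : √(P t ^ 2 + Q t ^ 2) ≠ 0 := (sqrt_pos.mpr hpos).ne'
  field_simp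
  ring

theorem HasDerivAt.div_of_hasDerivAt_eq_div {N D : ℝ → ℝ} {n t : ℝ} (hN : HasDerivAt N n t)
    (hD : HasDerivAt D (N t / D t) t) (hD0 : D t ≠ 0) :
    HasDerivAt (fun s => N s / D s) (n / D t - N t ^ 2 / D t ^ 3) t := by
  refine (hN.fun_div hD hD0).congr_deriv ?_
  field_simp

theorem unicycle_transformed_second_derivative_general
    (M : ℝ)
    (x y v θ φ u₁ u₂ : ℝ → ℝ)
    (hx : Differentiable ℝ x) (hy : Differentiable ℝ y)
    (hv : Differentiable ℝ v) (hθ : Differentiable ℝ θ)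
    (hφ : Differentiable ℝ φ)
    (hdx : ∀ t, deriv x t = v t * Real.cos (θ t))
    (hdy : ∀ t, deriv y t = v t * Real.sin (θ t))
    (hdv : ∀ t, deriv v t = u₂ t / M)
    (hdθ : ∀ t, deriv θ t = φ t)
    (hdφ : ∀ t, deriv φ t = u₁ t)
    (d : ℝ)
    (x₀ y₀ : ℝ) (X Y D P Q : ℝ → ℝ)
    (hX : ∀ t, X t = x t + d * Real.cos (θ t))
    (hY : ∀ t, Y t = y t + d * Real.sin (θ t))
    (hD : ∀ t, D t = Real.sqrt ((X t - x₀) ^ 2 + (Y t - y₀) ^ 2))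
    (hP : ∀ t, P t = (X t - x₀) * Real.cos (θ t) + (Y t - y₀) * Real.sin (θ t))
    (hQ : ∀ t, Q t = -(X t - x₀) * Real.sin (θ t) + (Y t - y₀) * Real.cos (θ t))
    (hDpos : ∀ t, 0 < D t)
    : (Differentiable ℝ D ∧ Differentiable ℝ (deriv D)) ∧
      ∀ t, deriv (deriv D) t =
        (P t / (M * D t)) * u₂ t + (d * Q t / D t) * u₁ t
          + (v t * (v t + φ t * Q t)
              + d * φ t * (d * φ t - φ t * P t)) / D t
          - (v t * P t + d * φ t * Q t) ^ 2 / (D t) ^ 3 := by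
  have hθ' t : HasDerivAt θ (φ t) t := hdθ t ▸ (hθ t).hasDerivAt
  have hX' t : HasDerivAt (fun s => X s - x₀) (v t * cos (θ t) - d * φ t * sin (θ t)) t := by
    rw [funext hX]
    exact (((hdx t ▸ (hx t).hasDerivAt).fun_add ((hθ' t).cos.const_mul d)).sub_const x₀).congr_deriv
      (by ring)
  have hY' t : HasDerivAt (fun s => Y s - y₀) (v t * sin (θ t) + d * φ t * cos (θ t)) t := by
    rw [funext hY]
    exact (((hdy t ▸ (hy t).hasDerivAt).fun_add ((hθ' t).sin.const_mul d)).sub_const y₀).congr_deriv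
      (by ring)
  have hP' t : HasDerivAt P (v t + φ t * Q t) t := by
    rw [funext hP, hQ]
    exact (hX' t).rotate_fst (hY' t) (hθ' t)
  have hQ' t : HasDerivAt Q (d * φ t - φ t * P t) t := by
    rw [funext hQ, hP]
    exact (hX' t).rotate_snd (hY' t) (hθ' t)
  have hDPQ t : D t = √(P t ^ 2 + Q t ^ 2) := by
    rw [hD, hP, hQ, sq_add_sq_rotate _ _ _ _ (sin_sq_add_cos_sq (θ t))]
  have hD' t : HasDerivAt D ((v t * P t + d * φ t * Q t) / D t) t := by
    have hpos : 0 < P t ^ 2 + Q t ^ 2 := sqrt_pos.mp (hDPQ t ▸ hDpos t)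
    have hsqrt := (hP' t).sqrt_sq_add_sq_s10 (hQ' t) hpos
    rw [← funext hDPQ, ← hDPQ] at hsqrt
    exact hsqrt.congr_deriv (by ring)
  have hN' t : HasDerivAt (fun s => v s * P s + d * φ s * Q s)
      (u₂ t / M * P t + v t * (v t + φ t * Q t)
        + d * (u₁ t * Q t + φ t * (d * φ t - φ t * P t))) t :=
    (((hdv t ▸ (hv t).hasDerivAt).fun_mul (hP' t)).fun_add
      (((hdφ t ▸ (hφ t).hasDerivAt).const_mul d).fun_mul (hQ' t))).congr_deriv (by ring)
  have hD'' t := (hN' t).div_of_hasDerivAt_eq_div (hD' t) (hDpos t).ne'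
  rw [← funext fun t => (hD' t).deriv] at hD''
  refine ⟨⟨fun t => (hD' t).differentiableAt, fun t => (hD'' t).differentiableAt⟩, fun t => ?_⟩
  rw [(hD'' t).deriv]
  ring

/-- Second Lie derivative of the transformed distance constraint for the
unicycle: both controls appear linearly, with coefficients `d Q / D` for
`u₁` and `P/(M D)` for `u₂`. -/
theorem unicycle_transformed_second_derivative
    (M : ℝ) (hM : 0 < M)
    (x y v θ φ u₁ u₂ : ℝ → ℝ)
    (hx : Differentiable ℝ x) (hy : Differentiable ℝ y)
    (hv : Differentiable ℝ v) (hθ : Differentiable ℝ θ)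
    (hφ : Differentiable ℝ φ)
    (hu₁ : Continuous u₁) (hu₂ : Continuous u₂)
    (hdx : ∀ t, deriv x t = v t * Real.cos (θ t))
    (hdy : ∀ t, deriv y t = v t * Real.sin (θ t))
    (hdv : ∀ t, deriv v t = u₂ t / M)
    (hdθ : ∀ t, deriv θ t = φ t)
    (hdφ : ∀ t, deriv φ t = u₁ t)
    (d : ℝ) (hd : 0 < d)
    (x₀ y₀ : ℝ) (X Y D P Q : ℝ → ℝ)
    (hX : ∀ t, X t = x t + d * Real.cos (θ t))
    (hY : ∀ t, Y t = y t + d * Real.sin (θ t))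
    (hD : ∀ t, D t = Real.sqrt ((X t - x₀) ^ 2 + (Y t - y₀) ^ 2))
    (hP : ∀ t, P t = (X t - x₀) * Real.cos (θ t) + (Y t - y₀) * Real.sin (θ t))
    (hQ : ∀ t, Q t = -(X t - x₀) * Real.sin (θ t) + (Y t - y₀) * Real.cos (θ t))
    (hDpos : ∀ t, 0 < D t)
    : (Differentiable ℝ D ∧ Differentiable ℝ (deriv D)) ∧
      ∀ t, deriv (deriv D) t =
        (P t / (M * D t)) * u₂ t + (d * Q t / D t) * u₁ t
          + (v t * (v t + φ t * Q t)
              + d * φ t * (d * φ t - φ t * P t)) / D t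
          - (v t * P t + d * φ t * Q t) ^ 2 / (D t) ^ 3 :=
  unicycle_transformed_second_derivative_general M x y v θ φ u₁ u₂ hx hy hv hθ hφ hdx hdy hdv hdθ
    hdφ d x₀ y₀ X Y D P Q hX hY hD hP hQ hDpos
end

section
/- (Safety of the unicycle under the second-order HOCBF constraint on u₂.) Let r > 0. Along any solution of the unicycle model, suppose ρ(0) − r ≥ 0, ρ'(0) + ρ(0) − r ≥ 0, and suppose the control u₂ satisfies for all t ≥ 0 the HOCBF-QP constraint (p/(M·ρ))·u₂ + v²/ρ + v·φ·q/ρ − v²·p²/ρ³ + 2·v·p/ρ + ρ − r ≥ 0 (all functions evaluated at t). Then ρ(t) ≥ r for all t ≥ 0, i.e., the safety constraint √((x−x₀)² + (y−y₀)²) ≥ r is satisfied for all t ≥ 0. -/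
/-!
With `b = ρ - r` one computes `ρ' = v p / ρ` and
`ρ'' = p u₂ / (M ρ) + v² / ρ + v φ q / ρ - v² p² / ρ³`, so the HOCBF-QP constraint reads
`b'' + 2 b' + b ≥ 0`, i.e. `ψ₁' + ψ₁ ≥ 0` for `ψ₁ = b' + b`. An inequality `f' + k f ≥ 0` with
`f 0 ≥ 0` keeps `f ≥ 0` on `[0, ∞)` because `exp (k t) * f t` is nondecreasing; apply it to `ψ₁`,
then to `b`.
-/

open Real Set

theorem nonneg_of_hasDerivAt_add_mul_nonneg_s11 {f f' : ℝ → ℝ} {k : ℝ}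
    (hf : ∀ t, 0 ≤ t → HasDerivAt f (f' t) t) (h0 : 0 ≤ f 0)
    (hineq : ∀ t, 0 ≤ t → 0 ≤ f' t + k * f t) {t : ℝ} (ht : 0 ≤ t) : 0 ≤ f t := by
  set g : ℝ → ℝ := fun s => exp (k * s) * f s
  have hg : ∀ s, 0 ≤ s → HasDerivAt g (exp (k * s) * (f' s + k * f s)) s := fun s hs =>
    (((hasDerivAt_id s).const_mul k).exp.mul (hf s hs)).congr_deriv
      (by simp only [id_eq, mul_one]; ring)
  have hmono : MonotoneOn g (Ici 0) := by
    refine monotoneOn_of_deriv_nonneg (convex_Ici 0)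
      (fun s hs => (hg s hs).continuousAt.continuousWithinAt) (fun s hs => ?_) (fun s hs => ?_)
    all_goals rw [interior_Ici] at hs
    · exact (hg s hs.le).differentiableAt.differentiableWithinAt
    · rw [(hg s hs.le).deriv]
      exact mul_nonneg (exp_pos _).le (hineq s hs.le)
  have hg0 : f 0 ≤ g t := by simpa [g] using hmono self_mem_Ici ht ht
  exact nonneg_of_mul_nonneg_right (h0.trans hg0) (exp_pos _)

/-- Class-`K` functions `s ↦ k₁ s`, `s ↦ k₂ s`: `ψ₁ = b' + k₁ b` and
`ψ₂ = ψ₁' + k₂ ψ₁ = b'' + (k₁ + k₂) b' + k₁ k₂ b`. -/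
theorem nonneg_of_hocbf_two {b b' b'' : ℝ → ℝ} {k₁ k₂ : ℝ}
    (hb : ∀ t, 0 ≤ t → HasDerivAt b (b' t) t) (hb' : ∀ t, 0 ≤ t → HasDerivAt b' (b'' t) t)
    (h0 : 0 ≤ b 0) (h1 : 0 ≤ b' 0 + k₁ * b 0)
    (h2 : ∀ t, 0 ≤ t → 0 ≤ b'' t + (k₁ + k₂) * b' t + k₁ * k₂ * b t)
    {t : ℝ} (ht : 0 ≤ t) : 0 ≤ b t := by
  have hψ₁ : ∀ s, 0 ≤ s → 0 ≤ b' s + k₁ * b s := by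
    refine fun s hs => nonneg_of_hasDerivAt_add_mul_nonneg_s11 (f := fun u => b' u + k₁ * b u)
      (k := k₂) (fun u hu => (hb' u hu).add ((hb u hu).const_mul k₁)) h1 (fun u hu => ?_) hs
    linarith [h2 u hu]
  exact nonneg_of_hasDerivAt_add_mul_nonneg_s11 hb h0 hψ₁ ht

section Unicycle

variable {x y v θ φ ρ p q : ℝ → ℝ} {x₀ y₀ : ℝ}
  (hx : ∀ t, HasDerivAt x (v t * cos (θ t)) t) (hy : ∀ t, HasDerivAt y (v t * sin (θ t)) t)

include hx hy

theorem hasDerivAt_obstacle_dist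
    (hρ : ∀ t, ρ t = √((x t - x₀) ^ 2 + (y t - y₀) ^ 2))
    (hp : ∀ t, p t = (x t - x₀) * cos (θ t) + (y t - y₀) * sin (θ t))
    {t : ℝ} (hρt : 0 < ρ t) : HasDerivAt ρ (v t * p t / ρ t) t := by
  have hsq : HasDerivAt (fun s => (x s - x₀) ^ 2 + (y s - y₀) ^ 2)
      (2 * (x t - x₀) * (v t * cos (θ t)) + 2 * (y t - y₀) * (v t * sin (θ t))) t :=
    ((((hx t).sub_const x₀).pow 2).add (((hy t).sub_const y₀).pow 2)).congr_deriv (by ring)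
  have hsq0 : (x t - x₀) ^ 2 + (y t - y₀) ^ 2 ≠ 0 := by
    rw [hρ] at hρt
    exact (sqrt_pos.mp hρt).ne'
  have h := hsq.sqrt hsq0
  rw [← funext hρ, ← hρ t] at h
  convert h using 1
  rw [hp]
  field_simp

theorem hasDerivAt_heading_component
    (hθ : ∀ t, HasDerivAt θ (φ t) t)
    (hp : ∀ t, p t = (x t - x₀) * cos (θ t) + (y t - y₀) * sin (θ t))
    (hq : ∀ t, q t = -(x t - x₀) * sin (θ t) + (y t - y₀) * cos (θ t)) (t : ℝ) :
    HasDerivAt p (v t + φ t * q t) t := by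
  rw [funext hp]
  refine ((((hx t).sub_const x₀).mul (hθ t).cos).add
    (((hy t).sub_const y₀).mul (hθ t).sin)).congr_deriv ?_
  rw [hq]
  linear_combination v t * sin_sq_add_cos_sq (θ t)

end Unicycle

theorem hasDerivAt_obstacle_dist_rate {v p ρ φ q : ℝ → ℝ} {a t : ℝ} (hv : HasDerivAt v a t)
    (hp : HasDerivAt p (v t + φ t * q t) t) (hρ : HasDerivAt ρ (v t * p t / ρ t) t)
    (hρt : ρ t ≠ 0) :
    HasDerivAt (fun s => v s * p s / ρ s)
      (a * p t / ρ t + v t ^ 2 / ρ t + v t * φ t * q t / ρ t - v t ^ 2 * p t ^ 2 / ρ t ^ 3) t := by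
  refine ((hv.mul hp).div hρ hρt).congr_deriv ?_
  field_simp
  simp only [Pi.mul_apply]
  ring

theorem unicycle_safety_second_order_hocbf_general
    (r : ℝ)
    (M : ℝ)
    (x y v θ φ u₂ : ℝ → ℝ)
    (hx : Differentiable ℝ x) (hy : Differentiable ℝ y)
    (hv : Differentiable ℝ v) (hθ : Differentiable ℝ θ)
    (hdx : ∀ t, deriv x t = v t * Real.cos (θ t))
    (hdy : ∀ t, deriv y t = v t * Real.sin (θ t))
    (hdv : ∀ t, deriv v t = u₂ t / M)
    (hdθ : ∀ t, deriv θ t = φ t)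
    (x₀ y₀ : ℝ) (ρ p q : ℝ → ℝ)
    (hρ : ∀ t, ρ t = Real.sqrt ((x t - x₀) ^ 2 + (y t - y₀) ^ 2))
    (hp : ∀ t, p t = (x t - x₀) * Real.cos (θ t) + (y t - y₀) * Real.sin (θ t))
    (hq : ∀ t, q t = -(x t - x₀) * Real.sin (θ t) + (y t - y₀) * Real.cos (θ t))
    (hρpos : ∀ t, 0 < ρ t)
    (hinit0 : ρ 0 - r ≥ 0)
    (hinit1 : deriv ρ 0 + ρ 0 - r ≥ 0)
    (hconstr : ∀ t : ℝ, 0 ≤ t →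
      (p t / (M * ρ t)) * u₂ t + (v t) ^ 2 / ρ t
        + v t * φ t * q t / ρ t
        - (v t) ^ 2 * (p t) ^ 2 / (ρ t) ^ 3
        + 2 * (v t * p t / ρ t) + ρ t - r ≥ 0) :
    ∀ t : ℝ, 0 ≤ t →
      Real.sqrt ((x t - x₀) ^ 2 + (y t - y₀) ^ 2) ≥ r := by
  have hxt t : HasDerivAt x (v t * cos (θ t)) t := hdx t ▸ (hx t).hasDerivAt
  have hyt t : HasDerivAt y (v t * sin (θ t)) t := hdy t ▸ (hy t).hasDerivAt
  have hθt t : HasDerivAt θ (φ t) t := hdθ t ▸ (hθ t).hasDerivAt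
  have hρ' t : HasDerivAt ρ (v t * p t / ρ t) t :=
    hasDerivAt_obstacle_dist hxt hyt hρ hp (hρpos t)
  have hρ'' t := hasDerivAt_obstacle_dist_rate (hdv t ▸ (hv t).hasDerivAt)
    (hasDerivAt_heading_component hxt hyt hθt hp hq t) (hρ' t) (hρpos t).ne'
  intro t ht
  rw [← hρ t, ge_iff_le, ← sub_nonneg]
  refine nonneg_of_hocbf_two (k₁ := 1) (k₂ := 1) (fun s _ => (hρ' s).sub_const r)
    (fun s _ => hρ'' s) (by linarith) ?_ (fun s hs => ?_) ht
  · linarith [(hρ' 0).deriv]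
  · linarith [hconstr s hs, show p s / (M * ρ s) * u₂ s = u₂ s / M * p s / ρ s by ring]

/-- Safety of the unicycle under the second-order HOCBF constraint on `u₂`:
if the initial conditions `ρ 0 − r ≥ 0`, `ρ' 0 + ρ 0 − r ≥ 0` hold and the
HOCBF-QP constraint holds for all `t ≥ 0`, then `ρ t ≥ r` for all `t ≥ 0`. -/
theorem unicycle_safety_second_order_hocbf
    (r : ℝ) (hr : 0 < r)
    (M : ℝ) (hM : 0 < M)
    (x y v θ φ u₁ u₂ : ℝ → ℝ)
    (hx : Differentiable ℝ x) (hy : Differentiable ℝ y)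
    (hv : Differentiable ℝ v) (hθ : Differentiable ℝ θ)
    (hφ : Differentiable ℝ φ)
    (hu₁ : Continuous u₁) (hu₂ : Continuous u₂)
    (hdx : ∀ t, deriv x t = v t * Real.cos (θ t))
    (hdy : ∀ t, deriv y t = v t * Real.sin (θ t))
    (hdv : ∀ t, deriv v t = u₂ t / M)
    (hdθ : ∀ t, deriv θ t = φ t)
    (hdφ : ∀ t, deriv φ t = u₁ t)
    (x₀ y₀ : ℝ) (ρ p q : ℝ → ℝ)
    (hρ : ∀ t, ρ t = Real.sqrt ((x t - x₀) ^ 2 + (y t - y₀) ^ 2))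
    (hp : ∀ t, p t = (x t - x₀) * Real.cos (θ t) + (y t - y₀) * Real.sin (θ t))
    (hq : ∀ t, q t = -(x t - x₀) * Real.sin (θ t) + (y t - y₀) * Real.cos (θ t))
    (hρpos : ∀ t, 0 < ρ t)
    (hinit0 : ρ 0 - r ≥ 0)
    (hinit1 : deriv ρ 0 + ρ 0 - r ≥ 0)
    (hconstr : ∀ t : ℝ, 0 ≤ t →
      (p t / (M * ρ t)) * u₂ t + (v t) ^ 2 / ρ t
        + v t * φ t * q t / ρ t
        - (v t) ^ 2 * (p t) ^ 2 / (ρ t) ^ 3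
        + 2 * (v t * p t / ρ t) + ρ t - r ≥ 0) :
    ∀ t : ℝ, 0 ≤ t →
      Real.sqrt ((x t - x₀) ^ 2 + (y t - y₀) ^ 2) ≥ r :=
  unicycle_safety_second_order_hocbf_general r M x y v θ φ u₂ hx hy hv hθ hdx hdy hdv hdθ x₀ y₀ ρ p
    q hρ hp hq hρpos hinit0 hinit1 hconstr
end

section
/- (Safety of the unicycle under the integral HOCBF constraint, with auxiliary dynamics u₂' = ν.) Let r > 0. Along any solution of the unicycle model in which u₂ is differentiable with u₂'(t) = ν(t) for a function ν : ℝ → ℝ, suppose the initial conditions ρ(0) − r ≥ 0, ρ'(0) + ρ(0) − r ≥ 0, and ρ''(0) + 2ρ'(0) + ρ(0) − r ≥ 0 hold, and suppose that for all t ≥ 0 the integral-HOCBF constraint holds: (v q/ρ)·u₁ + (p/(Mρ))·ν + (u₂/M)·((3v + 2φq)/ρ − 3v p²/ρ³) − v φ² p/ρ − 3v³ p/ρ³ − 3v² φ p q/ρ³ + 3v³ p³/ρ⁵ + 3·((p/(Mρ))·u₂ + v²/ρ + v φ q/ρ − v² p²/ρ³) + 3·v·p/ρ + ρ − r ≥ 0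 (all functions evaluated at t). Then ρ(t) ≥ r for all t ≥ 0, i.e., the safety constraint √((x−x₀)² + (y−y₀)²) ≥ r is satisfied for all t ≥ 0. -/
/-!
Put `b = ρ - r`, `ψ₀ = b` and `ψᵢ₊₁ = ψᵢ' + ψᵢ`; the constraint says
`ψ₃ = b''' + 3b'' + 3b' + b ≥ 0` on `[0, ∞)`. Since `(eᵗ ψᵢ)' = eᵗ ψᵢ₊₁`, each `eᵗ ψᵢ` is
monotone as soon as `ψᵢ₊₁ ≥ 0`, so with the initial conditions `ψᵢ(0) ≥ 0` nonnegativity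
descends from `ψ₃` to `ψ₀ = ρ - r`. What is specific to the unicycle is the computation of
`b'`, `b''`, `b'''`, which rests on `ρ' = v p / ρ`, `p' = v + φ q` and `q' = -φ p`.
-/

open Real

theorem nonneg_of_hasDerivAt_add_self_nonneg {f f' : ℝ → ℝ} {a : ℝ}
    (hf : ∀ t, a ≤ t → HasDerivAt f (f' t) t) (ha : 0 ≤ f a)
    (h : ∀ t, a ≤ t → 0 ≤ f' t + f t) {t : ℝ} (ht : a ≤ t) : 0 ≤ f t := by
  have hderiv : ∀ s, a ≤ s → HasDerivAt (fun u => exp u * f u) (exp s * (f' s + f s)) s :=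
    fun s hs => ((hasDerivAt_exp s).mul (hf s hs)).congr_deriv (by ring)
  have hmono : MonotoneOn (fun u => exp u * f u) (Set.Ici a) := by
    refine monotoneOn_of_deriv_nonneg (convex_Ici a)
      (fun s hs => (hderiv s hs).continuousAt.continuousWithinAt)
      (fun s hs => ?_) (fun s hs => ?_) <;> rw [interior_Ici] at hs
    · exact (hderiv s (hs.le)).differentiableAt.differentiableWithinAt
    · rw [(hderiv s (hs.le)).deriv]
      exact mul_nonneg (exp_nonneg s) (h s (hs.le))
  have hle := hmono Set.self_mem_Ici ht ht
  exact nonneg_of_mul_nonneg_right ((mul_nonneg (exp_nonneg a) ha).trans hle) (exp_pos t)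

theorem nonneg_of_hocbf_relDegree_three {f f₁ f₂ f₃ : ℝ → ℝ} {a : ℝ}
    (hf : ∀ t, a ≤ t → HasDerivAt f (f₁ t) t) (hf₁ : ∀ t, a ≤ t → HasDerivAt f₁ (f₂ t) t)
    (hf₂ : ∀ t, a ≤ t → HasDerivAt f₂ (f₃ t) t)
    (h₀ : 0 ≤ f a) (h₁ : 0 ≤ f₁ a + f a) (h₂ : 0 ≤ f₂ a + 2 * f₁ a + f a)
    (h : ∀ t, a ≤ t → 0 ≤ f₃ t + 3 * f₂ t + 3 * f₁ t + f t) {t : ℝ} (ht : a ≤ t) :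
    0 ≤ f t := by
  have hψ₂ : ∀ t, a ≤ t → 0 ≤ f₂ t + 2 * f₁ t + f t :=
    fun t ht => nonneg_of_hasDerivAt_add_self_nonneg (f := fun s => f₂ s + 2 * f₁ s + f s)
      (fun s hs => (((hf₂ s hs).add ((hf₁ s hs).const_mul 2)).add (hf s hs)))
      h₂ (fun s hs => by linarith [h s hs]) ht
  have hψ₁ : ∀ t, a ≤ t → 0 ≤ f₁ t + f t :=
    fun t ht => nonneg_of_hasDerivAt_add_self_nonneg (f := fun s => f₁ s + f s)
      (fun s hs => (hf₁ s hs).add (hf s hs)) h₁ (fun s hs => by linarith [hψ₂ s hs]) ht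
  exact nonneg_of_hasDerivAt_add_self_nonneg hf h₀ hψ₁ ht

section Kinematics

variable {x y θ : ℝ → ℝ} {x₀ y₀ v ω t : ℝ}

theorem hasDerivAt_alongHeading (hx : HasDerivAt x (v * cos (θ t)) t)
    (hy : HasDerivAt y (v * sin (θ t)) t) (hθ : HasDerivAt θ ω t) :
    HasDerivAt (fun s => (x s - x₀) * cos (θ s) + (y s - y₀) * sin (θ s))
      (v + ω * (-(x t - x₀) * sin (θ t) + (y t - y₀) * cos (θ t))) t :=
  (((hx.sub_const x₀).mul hθ.cos).add ((hy.sub_const y₀).mul hθ.sin)).congr_deriv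
    (by linear_combination v * sin_sq_add_cos_sq (θ t))

theorem hasDerivAt_acrossHeading (hx : HasDerivAt x (v * cos (θ t)) t)
    (hy : HasDerivAt y (v * sin (θ t)) t) (hθ : HasDerivAt θ ω t) :
    HasDerivAt (fun s => -(x s - x₀) * sin (θ s) + (y s - y₀) * cos (θ s))
      (-(ω * ((x t - x₀) * cos (θ t) + (y t - y₀) * sin (θ t)))) t :=
  (((hx.sub_const x₀).neg.mul hθ.sin).add ((hy.sub_const y₀).mul hθ.cos)).congr_deriv
    (by simp only [Pi.neg_apply]; ring)

end Kinematics

theorem hasDerivAt_sqrt_dist {x y : ℝ → ℝ} {x₀ y₀ a b t : ℝ} (hx : HasDerivAt x a t)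
    (hy : HasDerivAt y b t) (h : (x t - x₀) ^ 2 + (y t - y₀) ^ 2 ≠ 0) :
    HasDerivAt (fun s => √((x s - x₀) ^ 2 + (y s - y₀) ^ 2))
      (((x t - x₀) * a + (y t - y₀) * b) / √((x t - x₀) ^ 2 + (y t - y₀) ^ 2)) t := by
  refine ((((hx.sub_const x₀).pow 2).add ((hy.sub_const y₀).pow 2)).sqrt h).congr_deriv ?_
  simp only [Pi.add_apply, Pi.pow_apply]
  field_simp
  ring

section RadialDerivatives

variable {v a j p q ρ φ α : ℝ → ℝ} {t : ℝ}

noncomputable def radialAccel (a v p q ρ φ : ℝ → ℝ) (t : ℝ) : ℝ :=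
  a t * p t / ρ t + v t ^ 2 / ρ t + v t * φ t * q t / ρ t - v t ^ 2 * p t ^ 2 / ρ t ^ 3

theorem hasDerivAt_radialSpeed (hv : HasDerivAt v (a t) t)
    (hp : HasDerivAt p (v t + φ t * q t) t) (hρ : HasDerivAt ρ (v t * p t / ρ t) t)
    (hρ₀ : ρ t ≠ 0) :
    HasDerivAt (fun s => v s * p s / ρ s) (radialAccel a v p q ρ φ t) t := by
  refine ((hv.mul hp).div hρ hρ₀).congr_deriv ?_
  simp only [radialAccel, Pi.mul_apply]
  field_simp
  ring

theorem hasDerivAt_radialAccel (hv : HasDerivAt v (a t) t) (ha : HasDerivAt a (j t) t)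
    (hp : HasDerivAt p (v t + φ t * q t) t) (hq : HasDerivAt q (-(φ t * p t)) t)
    (hφ : HasDerivAt φ (α t) t) (hρ : HasDerivAt ρ (v t * p t / ρ t) t) (hρ₀ : ρ t ≠ 0) :
    HasDerivAt (radialAccel a v p q ρ φ)
      (v t * q t / ρ t * α t + p t / ρ t * j t
        + a t * ((3 * v t + 2 * φ t * q t) / ρ t - 3 * v t * p t ^ 2 / ρ t ^ 3)
        - v t * φ t ^ 2 * p t / ρ t - 3 * v t ^ 3 * p t / ρ t ^ 3
        - 3 * v t ^ 2 * φ t * p t * q t / ρ t ^ 3 + 3 * v t ^ 3 * p t ^ 3 / ρ t ^ 5) t := by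
  have h := ((((ha.mul hp).div hρ hρ₀).add ((hv.pow 2).div hρ hρ₀)).add
    (((hv.mul hφ).mul hq).div hρ hρ₀)).sub
    (((hv.pow 2).mul (hp.pow 2)).div (hρ.pow 3) (pow_ne_zero 3 hρ₀))
  refine h.congr_deriv ?_
  simp only [Pi.mul_apply, Pi.pow_apply]
  field_simp
  ring

end RadialDerivatives

theorem unicycle_safety_integral_hocbf_general
    (r : ℝ)
    (M : ℝ)
    (x y v θ φ u₁ u₂ : ℝ → ℝ)
    (hx : Differentiable ℝ x) (hy : Differentiable ℝ y)
    (hv : Differentiable ℝ v) (hθ : Differentiable ℝ θ)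
    (hφ : Differentiable ℝ φ)
    (hdx : ∀ t, deriv x t = v t * Real.cos (θ t))
    (hdy : ∀ t, deriv y t = v t * Real.sin (θ t))
    (hdv : ∀ t, deriv v t = u₂ t / M)
    (hdθ : ∀ t, deriv θ t = φ t)
    (hdφ : ∀ t, deriv φ t = u₁ t)
    (ν : ℝ → ℝ) (hu₂d : Differentiable ℝ u₂)
    (hdu₂ : ∀ t, deriv u₂ t = ν t)
    (x₀ y₀ : ℝ) (ρ p q : ℝ → ℝ)
    (hρ : ∀ t, ρ t = Real.sqrt ((x t - x₀) ^ 2 + (y t - y₀) ^ 2))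
    (hp : ∀ t, p t = (x t - x₀) * Real.cos (θ t) + (y t - y₀) * Real.sin (θ t))
    (hq : ∀ t, q t = -(x t - x₀) * Real.sin (θ t) + (y t - y₀) * Real.cos (θ t))
    (hρpos : ∀ t, 0 < ρ t)
    (hinit0 : ρ 0 - r ≥ 0)
    (hinit1 : deriv ρ 0 + ρ 0 - r ≥ 0)
    (hinit2 : deriv (deriv ρ) 0 + 2 * deriv ρ 0 + ρ 0 - r ≥ 0)
    (hconstr : ∀ t : ℝ, 0 ≤ t →
      (v t * q t / ρ t) * u₁ t
        + (p t / (M * ρ t)) * ν t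
        + (u₂ t / M) * ((3 * v t + 2 * φ t * q t) / ρ t
            - 3 * v t * (p t) ^ 2 / (ρ t) ^ 3)
        - v t * (φ t) ^ 2 * p t / ρ t
        - 3 * (v t) ^ 3 * p t / (ρ t) ^ 3
        - 3 * (v t) ^ 2 * φ t * p t * q t / (ρ t) ^ 3
        + 3 * (v t) ^ 3 * (p t) ^ 3 / (ρ t) ^ 5
        + 3 * ((p t / (M * ρ t)) * u₂ t + (v t) ^ 2 / ρ t
            + v t * φ t * q t / ρ t
            - (v t) ^ 2 * (p t) ^ 2 / (ρ t) ^ 3)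
        + 3 * (v t * p t / ρ t) + ρ t - r ≥ 0) :
    ∀ t : ℝ, 0 ≤ t →
      Real.sqrt ((x t - x₀) ^ 2 + (y t - y₀) ^ 2) ≥ r := by
  have hx' t : HasDerivAt x (v t * cos (θ t)) t := hdx t ▸ (hx t).hasDerivAt
  have hy' t : HasDerivAt y (v t * sin (θ t)) t := hdy t ▸ (hy t).hasDerivAt
  have hθ' t : HasDerivAt θ (φ t) t := hdθ t ▸ (hθ t).hasDerivAt
  have hv' t : HasDerivAt v (u₂ t / M) t := hdv t ▸ (hv t).hasDerivAt
  have ha' t : HasDerivAt (fun s => u₂ s / M) (ν t / M) t :=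
    (hdu₂ t ▸ (hu₂d t).hasDerivAt).div_const M
  have hφ' t : HasDerivAt φ (u₁ t) t := hdφ t ▸ (hφ t).hasDerivAt
  have hp' t : HasDerivAt p (v t + φ t * q t) t := by
    rw [hq t, funext hp]; exact hasDerivAt_alongHeading (hx' t) (hy' t) (hθ' t)
  have hq' t : HasDerivAt q (-(φ t * p t)) t := by
    rw [hp t, funext hq]; exact hasDerivAt_acrossHeading (hx' t) (hy' t) (hθ' t)
  have hρ' t : HasDerivAt ρ (v t * p t / ρ t) t := by
    have hpos : 0 < (x t - x₀) ^ 2 + (y t - y₀) ^ 2 := sqrt_pos.mp (hρ t ▸ hρpos t)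
    have h := hasDerivAt_sqrt_dist (x₀ := x₀) (y₀ := y₀) (hx' t) (hy' t) hpos.ne'
    rw [← funext hρ, ← hρ t] at h
    exact h.congr_deriv (by rw [hp t]; ring)
  have hρ'' t :=
    hasDerivAt_radialSpeed (a := fun s => u₂ s / M) (hv' t) (hp' t) (hρ' t) (hρpos t).ne'
  have hρ''' t := hasDerivAt_radialAccel (j := fun s => ν s / M)
    (hv' t) (ha' t) (hp' t) (hq' t) (hφ' t) (hρ' t) (hρpos t).ne'
  have hderiv : deriv ρ = fun s => v s * p s / ρ s := funext fun s => (hρ' s).deriv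
  intro t ht
  rw [← hρ t, ge_iff_le, ← sub_nonneg]
  refine nonneg_of_hocbf_relDegree_three (f := fun s => ρ s - r)
    (fun s _ => (hρ' s).sub_const r) (fun s _ => hρ'' s) (fun s _ => hρ''' s)
    (by linarith) ?_ ?_ (fun s hs => ?_) ht
  · rw [hderiv] at hinit1; linarith
  · rw [hderiv, (hρ'' 0).deriv] at hinit2; linarith
  · simp only [radialAccel]
    linear_combination hconstr s hs

/-- Safety of the unicycle under the integral HOCBF constraint with
auxiliary dynamics `u₂' = ν`: if the third-order HOCBF initial conditions
hold and the integral-HOCBF constraint holds for all `t ≥ 0`, then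
`ρ t ≥ r` for all `t ≥ 0`. -/
theorem unicycle_safety_integral_hocbf
    (r : ℝ) (hr : 0 < r)
    (M : ℝ) (hM : 0 < M)
    (x y v θ φ u₁ u₂ : ℝ → ℝ)
    (hx : Differentiable ℝ x) (hy : Differentiable ℝ y)
    (hv : Differentiable ℝ v) (hθ : Differentiable ℝ θ)
    (hφ : Differentiable ℝ φ)
    (hu₁ : Continuous u₁) (hu₂ : Continuous u₂)
    (hdx : ∀ t, deriv x t = v t * Real.cos (θ t))
    (hdy : ∀ t, deriv y t = v t * Real.sin (θ t))
    (hdv : ∀ t, deriv v t = u₂ t / M)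
    (hdθ : ∀ t, deriv θ t = φ t)
    (hdφ : ∀ t, deriv φ t = u₁ t)
    (ν : ℝ → ℝ) (hu₂d : Differentiable ℝ u₂)
    (hdu₂ : ∀ t, deriv u₂ t = ν t)
    (x₀ y₀ : ℝ) (ρ p q : ℝ → ℝ)
    (hρ : ∀ t, ρ t = Real.sqrt ((x t - x₀) ^ 2 + (y t - y₀) ^ 2))
    (hp : ∀ t, p t = (x t - x₀) * Real.cos (θ t) + (y t - y₀) * Real.sin (θ t))
    (hq : ∀ t, q t = -(x t - x₀) * Real.sin (θ t) + (y t - y₀) * Real.cos (θ t))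
    (hρpos : ∀ t, 0 < ρ t)
    (hinit0 : ρ 0 - r ≥ 0)
    (hinit1 : deriv ρ 0 + ρ 0 - r ≥ 0)
    (hinit2 : deriv (deriv ρ) 0 + 2 * deriv ρ 0 + ρ 0 - r ≥ 0)
    (hconstr : ∀ t : ℝ, 0 ≤ t →
      (v t * q t / ρ t) * u₁ t
        + (p t / (M * ρ t)) * ν t
        + (u₂ t / M) * ((3 * v t + 2 * φ t * q t) / ρ t
            - 3 * v t * (p t) ^ 2 / (ρ t) ^ 3)
        - v t * (φ t) ^ 2 * p t / ρ t
        - 3 * (v t) ^ 3 * p t / (ρ t) ^ 3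
        - 3 * (v t) ^ 2 * φ t * p t * q t / (ρ t) ^ 3
        + 3 * (v t) ^ 3 * (p t) ^ 3 / (ρ t) ^ 5
        + 3 * ((p t / (M * ρ t)) * u₂ t + (v t) ^ 2 / ρ t
            + v t * φ t * q t / ρ t
            - (v t) ^ 2 * (p t) ^ 2 / (ρ t) ^ 3)
        + 3 * (v t * p t / ρ t) + ρ t - r ≥ 0) :
    ∀ t : ℝ, 0 ≤ t →
      Real.sqrt ((x t - x₀) ^ 2 + (y t - y₀) ^ 2) ≥ r :=
  unicycle_safety_integral_hocbf_general r M x y v θ φ u₁ u₂ hx hy hv hθ hφ hdx hdy hdv hdθ hdφ ν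
    hu₂d hdu₂ x₀ y₀ ρ p q hρ hp hq hρpos hinit0 hinit1 hinit2 hconstr
end
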